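/- arXiv:2408.16066 — 5 statements merged into one kernel-verified Lean document; each statement's English description precedes it below -/
import Mathlib

section
/- For any n×n complex matrix A, the k-numerical radius w_k(A) equals the maximum over θ ∈ [0,2π) of half the sum of the k largest eigenvalues of e^{iθ}A + e^{-iθ}A*. -/
/-!
Ky Fan's maximum principle: for Hermitian `H`, the largest value of `re tr (H P)` over orthogonal
projections `P` of rank `k` is the sum of the `k` largest eigenvalues of `H` (diagonalise `H`; the
diagonal of the conjugated projection is a weight vector in `[0, 1]` summing to `k`). For
`H = c A + c̄ Aᴴ` with `|c| = 1` one has `re tr (H P) = 2 re (c tr (A P)) ≤ 2 |tr (A P)|`, so half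
that eigenvalue sum is at most `w_k(A)`. Conversely, rank-`k` projections form a compact set, so
`w_k(A) = |tr (A P₀)|` for some `P₀`, and rotating by `c = e^{-i arg tr (A P₀)}` gives equality.
-/

open Matrix

/-- `P` is an orthogonal projection of rank `k`. -/
def IsProjOfRank {m : Type*} [Fintype m] [DecidableEq m]
    (P : Matrix m m ℂ) (k : ℕ) : Prop :=
  P * P = P ∧ Pᴴ = P ∧ P.rank = k

/-- The `k`-numerical range `W_k(A) = { tr (A P) : P an orthogonal projection of rank k }`. -/
def WK {m : Type*} [Fintype m] [DecidableEq m] (k : ℕ) (A : Matrix m m ℂ) : Set ℂ :=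
  {z | ∃ P : Matrix m m ℂ, IsProjOfRank P k ∧ z = (A * P).trace}

/-- The `k`-numerical radius `w_k(A) = max { |tr (A P)| : P a rank-k orthogonal projection }`. -/
noncomputable def wk {m : Type*} [Fintype m] [DecidableEq m] (k : ℕ) (A : Matrix m m ℂ) : ℝ :=
  sSup {r : ℝ | ∃ P : Matrix m m ℂ, IsProjOfRank P k ∧ r = ‖(A * P).trace‖}

/-- `A` and `B` are parallel with respect to the `k`-numerical radius. -/
noncomputable def ParallelWk {m : Type*} [Fintype m] [DecidableEq m]
    (k : ℕ) (A B : Matrix m m ℂ) : Prop :=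
  ∃ μ : ℂ, ‖μ‖ = 1 ∧ wk k (A + μ • B) = wk k A + wk k B

/-- Sum of the `k` largest eigenvalues of a Hermitian matrix (`0` if not Hermitian). -/
noncomputable def sumKLargest {m : Type*} [Fintype m] [DecidableEq m]
    (k : ℕ) (A : Matrix m m ℂ) : ℝ :=
  if h : A.IsHermitian then
    sSup {r : ℝ | ∃ s : Finset m, s.card = k ∧ r = ∑ i ∈ s, h.eigenvalues i}
  else 0

/-- Sum of the `k` smallest eigenvalues of a Hermitian matrix (`0` if not Hermitian). -/
noncomputable def sumKSmallest {m : Type*} [Fintype m] [DecidableEq m]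
    (k : ℕ) (A : Matrix m m ℂ) : ℝ :=
  if h : A.IsHermitian then
    sInf {r : ℝ | ∃ s : Finset m, s.card = k ∧ r = ∑ i ∈ s, h.eigenvalues i}
  else 0

open Finset

lemma le_of_mem_of_notMem_of_sum_maximal {m : Type*} (lam : m → ℝ) {s : Finset m}
    (hmax : ∀ s' : Finset m, s'.card = s.card → ∑ i ∈ s', lam i ≤ ∑ i ∈ s, lam i)
    {i j : m} (hi : i ∈ s) (hj : j ∉ s) : lam j ≤ lam i := by
  classical
  have hj' : j ∉ s.erase i := fun h => hj (mem_of_mem_erase h)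
  have := hmax (insert j (s.erase i)) (by
    rw [card_insert_of_notMem hj', card_erase_of_mem hi]
    have := card_pos.mpr ⟨i, hi⟩
    omega)
  rw [sum_insert hj', sum_erase_eq_sub hi] at this
  linarith

lemma exists_isGreatest_sum_of_card_eq {m : Type*} [Fintype m] {k : ℕ} (lam : m → ℝ)
    (hk : k ≤ Fintype.card m) :
    ∃ s : Finset m, s.card = k ∧
      IsGreatest {r | ∃ s' : Finset m, s'.card = k ∧ r = ∑ i ∈ s', lam i} (∑ i ∈ s, lam i) := by
  have hne : {s : Finset m | s.card = k}.Nonempty :=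
    (powersetCard_nonempty.mpr (by simpa using hk)).imp fun _ => mem_powersetCard_univ.mp
  obtain ⟨s, hs, hmax⟩ :=
    Set.exists_max_image _ (fun s => ∑ i ∈ s, lam i) (Set.toFinite _) hne
  exact ⟨s, hs, ⟨s, hs, rfl⟩, by rintro _ ⟨s', hs', rfl⟩; exact hmax s' hs'⟩

lemma sum_mul_le_sum_of_threshold {m : Type*} [Fintype m] (lam t : m → ℝ) {s : Finset m}
    {c : ℝ} (hs : ∀ i ∈ s, c ≤ lam i) (hsc : ∀ i ∉ s, lam i ≤ c) (ht0 : ∀ i, 0 ≤ t i)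
    (ht1 : ∀ i, t i ≤ 1) (hsum : ∑ i, t i = s.card) :
    ∑ i, lam i * t i ≤ ∑ i ∈ s, lam i := by
  classical
  have hpt (i : m) :
      lam i * t i ≤ (if i ∈ s then lam i else 0) + c * (t i - if i ∈ s then 1 else 0) := by
    split_ifs with hi
    · nlinarith [hs i hi, ht1 i]
    · nlinarith [hsc i hi, ht0 i]
  calc ∑ i, lam i * t i
      ≤ ∑ i, ((if i ∈ s then lam i else 0) + c * (t i - if i ∈ s then 1 else 0)) :=
        sum_le_sum fun i _ => hpt i
    _ = ∑ i ∈ s, lam i := by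
        simp [sum_add_distrib, ← mul_sum, sum_sub_distrib, hsum]

lemma sum_mul_le_sum_of_sum_maximal {m : Type*} [Fintype m] (lam t : m → ℝ) {s : Finset m}
    (hs : s.Nonempty)
    (hmax : ∀ s' : Finset m, s'.card = s.card → ∑ i ∈ s', lam i ≤ ∑ i ∈ s, lam i)
    (ht0 : ∀ i, 0 ≤ t i) (ht1 : ∀ i, t i ≤ 1) (hsum : ∑ i, t i = s.card) :
    ∑ i, lam i * t i ≤ ∑ i ∈ s, lam i := by
  obtain ⟨i₀, hi₀, hmin⟩ := exists_mem_eq_inf' hs lam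
  exact sum_mul_le_sum_of_threshold lam t (fun i hi => inf'_le lam hi)
    (fun j hj => hmin ▸ le_of_mem_of_notMem_of_sum_maximal lam hmax hi₀ hj) ht0 ht1 hsum

lemma isHermitian_smul_add_star_smul_conjTranspose {m : Type*} (A : Matrix m m ℂ) (c : ℂ) :
    (c • A + star c • Aᴴ).IsHermitian := by
  rw [IsHermitian, conjTranspose_add, conjTranspose_smul, conjTranspose_smul,
    conjTranspose_conjTranspose, star_star, add_comm]

variable {m : Type*} [Fintype m] [DecidableEq m] {k : ℕ}

lemma Matrix.trace_conjStarAlgAut (U : unitaryGroup m ℂ) (X : Matrix m m ℂ) :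
    (Unitary.conjStarAlgAut ℂ _ U X).trace = X.trace := by
  rw [Unitary.conjStarAlgAut_apply, trace_mul_cycle, Unitary.coe_star_mul_self, one_mul]

lemma Matrix.trace_conjStarAlgAut_mul (U : unitaryGroup m ℂ) (X Y : Matrix m m ℂ) :
    (Unitary.conjStarAlgAut ℂ _ U X * Y).trace =
      (X * (Unitary.conjStarAlgAut ℂ _ U).symm Y).trace := by
  conv_lhs => rw [← StarAlgEquiv.apply_symm_apply (Unitary.conjStarAlgAut ℂ _ U) Y, ← map_mul]
  exact trace_conjStarAlgAut U _

lemma Matrix.trace_diagonal_mul (d : m → ℂ) (X : Matrix m m ℂ) :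
    (diagonal d * X).trace = ∑ i, d i * X i i := by
  simp [trace, diagonal_mul]

namespace IsProjOfRank

variable {P : Matrix m m ℂ}

lemma re_apply_self (hP : IsProjOfRank P k) (i : m) : (P i i).re = ∑ j, ‖P j i‖ ^ 2 := by
  obtain ⟨hidem, hherm, -⟩ := hP
  have : P i i = (Pᴴ * P) i i := by rw [hherm, hidem]
  rw [this, mul_apply, Complex.re_sum]
  refine sum_congr rfl fun j _ => ?_
  rw [conjTranspose_apply, Complex.star_def, Complex.conj_mul']
  norm_cast

lemma re_apply_self_mem_Icc (hP : IsProjOfRank P k) (i : m) : (P i i).re ∈ Set.Icc 0 1 := by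
  have hnonneg : 0 ≤ (P i i).re := hP.re_apply_self i ▸ sum_nonneg fun _ _ => by positivity
  have hsq : (P i i).re ^ 2 ≤ (P i i).re :=
    calc (P i i).re ^ 2 ≤ ‖P i i‖ ^ 2 := by gcongr; exact Complex.re_le_norm _
      _ ≤ ∑ j, ‖P j i‖ ^ 2 :=
        single_le_sum (f := fun j => ‖P j i‖ ^ 2) (fun _ _ => by positivity) (mem_univ i)
      _ = (P i i).re := (hP.re_apply_self i).symm
  exact ⟨hnonneg, by nlinarith⟩

lemma norm_apply_le_one (hP : IsProjOfRank P k) (i j : m) : ‖P i j‖ ≤ 1 := by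
  have : ‖P i j‖ ^ 2 ≤ 1 :=
    calc ‖P i j‖ ^ 2 ≤ ∑ i', ‖P i' j‖ ^ 2 := single_le_sum (f := fun i' => ‖P i' j‖ ^ 2)
          (fun _ _ => by positivity) (mem_univ i)
      _ = (P j j).re := (hP.re_apply_self j).symm
      _ ≤ 1 := (hP.re_apply_self_mem_Icc j).2
  exact (pow_le_one_iff_of_nonneg (norm_nonneg _) two_ne_zero).mp this

lemma trace_eq (hP : IsProjOfRank P k) : P.trace = k := by
  obtain ⟨hidem, hherm, hrank⟩ := hP
  have hH : P.IsHermitian := hherm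
  have h01 : ∀ i, hH.eigenvalues i = 0 ∨ hH.eigenvalues i = 1 := fun i =>
    IsIdempotentElem.spectrum_subset ℝ hidem (hH.eigenvalues_mem_spectrum_real i)
  rw [hH.trace_eq_sum_eigenvalues, ← hrank, hH.rank_eq_card_non_zero_eigs, Fintype.card_subtype,
    ← sum_boole]
  refine sum_congr rfl fun i _ => ?_
  rcases h01 i with h | h <;> simp [h]

lemma map_conjStarAlgAut (hP : IsProjOfRank P k) (U : unitaryGroup m ℂ) :
    IsProjOfRank (Unitary.conjStarAlgAut ℂ _ U P) k := by
  obtain ⟨hidem, hherm, hrank⟩ := hP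
  have hdet (V : unitaryGroup m ℂ) : IsUnit (V : Matrix m m ℂ).det :=
    (isUnit_iff_isUnit_det _).mp (Unitary.toUnits V).isUnit
  refine ⟨by rw [← map_mul, hidem],
    by rw [← star_eq_conjTranspose, ← map_star, star_eq_conjTranspose, hherm], ?_⟩
  rw [Unitary.conjStarAlgAut_apply, ← Unitary.coe_star,
    rank_mul_eq_left_of_isUnit_det _ _ (hdet (star U)),
    rank_mul_eq_right_of_isUnit_det _ _ (hdet U), hrank]

end IsProjOfRank

lemma isProjOfRank_diagonal_indicator (s : Finset m) :
    IsProjOfRank (diagonal fun i => if i ∈ s then (1 : ℂ) else 0) s.card := by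
  refine ⟨?_, ?_, ?_⟩
  · rw [diagonal_mul_diagonal]; congr; ext i; split_ifs <;> simp
  · rw [diagonal_conjTranspose]; congr; ext i; split_ifs <;> simp [*]
  · rw [rank_diagonal, Fintype.card_subtype]; congr; ext i; simp

lemma isCompact_setOf_isProjOfRank (k : ℕ) : IsCompact {P : Matrix m m ℂ | IsProjOfRank P k} := by
  -- the rank is not continuous, but on orthogonal projections it equals the trace
  have hset : {P : Matrix m m ℂ | IsProjOfRank P k} =
      {P | P * P = P ∧ Pᴴ = P ∧ P.trace = (k : ℂ)} := by
    ext P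
    refine ⟨fun hP => ⟨hP.1, hP.2.1, hP.trace_eq⟩, fun ⟨hidem, hherm, htr⟩ => ⟨hidem, hherm, ?_⟩⟩
    have : P.trace = P.rank := IsProjOfRank.trace_eq ⟨hidem, hherm, rfl⟩
    exact_mod_cast this.symm.trans htr
  have hclosed : IsClosed {P : Matrix m m ℂ | P * P = P ∧ Pᴴ = P ∧ P.trace = (k : ℂ)} :=
    (isClosed_eq (continuous_id.matrix_mul continuous_id) continuous_id).inter
      ((isClosed_eq continuous_id.matrix_conjTranspose continuous_id).inter
        (isClosed_eq continuous_id.matrix_trace continuous_const))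
  have hball : IsCompact (Set.univ.pi fun _ : m => Set.univ.pi fun _ : m =>
      Metric.closedBall (0 : ℂ) 1) :=
    isCompact_univ_pi fun _ => isCompact_univ_pi fun _ => isCompact_closedBall _ _
  refine hset ▸ hball.of_isClosed_subset hclosed fun P ⟨hidem, hherm, _⟩ i _ j _ => ?_
  simpa using IsProjOfRank.norm_apply_le_one ⟨hidem, hherm, rfl⟩ i j

section KyFan

variable {H : Matrix m m ℂ} (hH : H.IsHermitian)
include hH

lemma Matrix.IsHermitian.trace_mul_eq_sum_eigenvalues_mul (P : Matrix m m ℂ) :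
    (H * P).trace =
      ∑ i, (hH.eigenvalues i : ℂ) *
        (Unitary.conjStarAlgAut ℂ _ hH.eigenvectorUnitary).symm P i i := by
  conv_lhs => rw [hH.spectral_theorem]
  rw [trace_conjStarAlgAut_mul, trace_diagonal_mul]
  rfl

lemma Matrix.IsHermitian.re_trace_mul_le_sumKLargest {P : Matrix m m ℂ} (hk : 1 ≤ k)
    (hP : IsProjOfRank P k) : (H * P).trace.re ≤ sumKLargest k H := by
  obtain ⟨s, hs, hgreat⟩ :=
    exists_isGreatest_sum_of_card_eq hH.eigenvalues (hP.2.2 ▸ P.rank_le_card_width)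
  set Q := (Unitary.conjStarAlgAut ℂ _ hH.eigenvectorUnitary).symm P
  have hQ : IsProjOfRank Q k := by
    simpa [Q] using hP.map_conjStarAlgAut (star hH.eigenvectorUnitary)
  rw [sumKLargest, dif_pos hH, hgreat.csSup_eq, hH.trace_mul_eq_sum_eigenvalues_mul,
    Complex.re_sum]
  simp only [Complex.re_ofReal_mul]
  refine sum_mul_le_sum_of_sum_maximal _ _ (card_pos.mp (hs ▸ hk))
    (fun s' hs' => hgreat.2 ⟨s', hs'.trans hs, rfl⟩) (fun i => (hQ.re_apply_self_mem_Icc i).1)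
    (fun i => (hQ.re_apply_self_mem_Icc i).2) ?_
  rw [hs, ← Complex.re_sum]
  exact_mod_cast congrArg Complex.re hQ.trace_eq

lemma Matrix.IsHermitian.exists_isProjOfRank_trace_mul_eq_sumKLargest
    (hkm : k ≤ Fintype.card m) :
    ∃ P, IsProjOfRank P k ∧ (H * P).trace = (sumKLargest k H : ℂ) := by
  obtain ⟨s, hs, hgreat⟩ := exists_isGreatest_sum_of_card_eq hH.eigenvalues hkm
  refine ⟨Unitary.conjStarAlgAut ℂ _ hH.eigenvectorUnitary
      (diagonal fun i => if i ∈ s then 1 else 0),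
    hs ▸ (isProjOfRank_diagonal_indicator s).map_conjStarAlgAut _, ?_⟩
  rw [hH.trace_mul_eq_sum_eigenvalues_mul, StarAlgEquiv.symm_apply_apply, sumKLargest, dif_pos hH,
    hgreat.csSup_eq]
  simp [sum_ite_mem]

end KyFan

lemma isGreatest_wk (A : Matrix m m ℂ) (hkm : k ≤ Fintype.card m) :
    IsGreatest {r | ∃ P, IsProjOfRank P k ∧ r = ‖(A * P).trace‖} (wk k A) := by
  have hset : {r | ∃ P, IsProjOfRank P k ∧ r = ‖(A * P).trace‖} =
      (fun P => ‖(A * P).trace‖) '' {P | IsProjOfRank P k} := by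
    ext; simp [eq_comm]
  have hcompact : IsCompact {r | ∃ P, IsProjOfRank P k ∧ r = ‖(A * P).trace‖} :=
    hset ▸ (isCompact_setOf_isProjOfRank k).image (by fun_prop)
  obtain ⟨s, hs⟩ := (powersetCard_nonempty (s := (univ : Finset m))).mpr (by simpa using hkm)
  have hne : {r | ∃ P, IsProjOfRank P k ∧ r = ‖(A * P).trace‖}.Nonempty :=
    ⟨_, _, (mem_powersetCard_univ.mp hs) ▸ isProjOfRank_diagonal_indicator s, rfl⟩
  obtain ⟨r, hr⟩ := hcompact.exists_isGreatest hne
  rwa [wk, hr.csSup_eq]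

lemma re_trace_smul_add_star_smul_conjTranspose_mul (A : Matrix m m ℂ) (c : ℂ)
    {P : Matrix m m ℂ} (hP : Pᴴ = P) :
    ((c • A + star c • Aᴴ) * P).trace.re = 2 * (c * (A * P).trace).re := by
  have : (Aᴴ * P).trace = star (A * P).trace := by
    rw [← trace_conjTranspose, conjTranspose_mul, hP, trace_mul_comm]
  simp [Matrix.add_mul, trace_add, this]
  ring

lemma sumKLargest_smul_add_star_smul_conjTranspose_le (A : Matrix m m ℂ)
    (hkm : k ≤ Fintype.card m) {c : ℂ} (hc : ‖c‖ = 1) :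
    sumKLargest k (c • A + star c • Aᴴ) ≤ 2 * wk k A := by
  obtain ⟨P, hP, htr⟩ := (isHermitian_smul_add_star_smul_conjTranspose A c)
    |>.exists_isProjOfRank_trace_mul_eq_sumKLargest hkm
  calc sumKLargest k (c • A + star c • Aᴴ)
      = 2 * (c * (A * P).trace).re := by
        rw [← re_trace_smul_add_star_smul_conjTranspose_mul A c hP.2.1, htr, Complex.ofReal_re]
    _ ≤ 2 * ‖(A * P).trace‖ := by
        gcongr
        exact (Complex.re_le_norm _).trans (by rw [norm_mul, hc, one_mul])
    _ ≤ 2 * wk k A := by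
        gcongr
        exact (isGreatest_wk A hkm).2 ⟨P, hP, rfl⟩

lemma star_exp_ofReal_mul_I (θ : ℝ) :
    star (Complex.exp (θ * Complex.I)) = Complex.exp (-(θ * Complex.I)) := by
  rw [Complex.star_def, ← Complex.exp_conj]
  simp

lemma exists_mem_Ico_exp_mul_I_mul_eq_norm (z : ℂ) :
    ∃ θ ∈ Set.Ico 0 (2 * Real.pi), Complex.exp (θ * Complex.I) * z = ‖z‖ := by
  have hper : Function.Periodic (fun θ : ℝ => Complex.exp (θ * Complex.I)) (2 * Real.pi) :=
    fun θ => by simpa using Complex.exp_mul_I_periodic θ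
  obtain ⟨θ, hθ, heq⟩ := hper.exists_mem_Ico₀ Real.two_pi_pos (-z.arg)
  refine ⟨θ, hθ, ?_⟩
  rw [← heq]
  conv_lhs => rw [← Complex.norm_mul_exp_arg_mul_I z]
  rw [mul_left_comm, ← Complex.exp_add]
  simp

/-- `w_k(A)` is the maximum over `θ ∈ [0, 2π)` of half the sum of the `k`
largest eigenvalues of `e^{iθ} A + e^{-iθ} Aᴴ`. -/
theorem stmt_0 (n k : ℕ) (hk : 1 ≤ k) (hkn : k ≤ n) (A : Matrix (Fin n) (Fin n) ℂ) :
    IsGreatest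
      {r : ℝ | ∃ θ : ℝ, θ ∈ Set.Ico 0 (2 * Real.pi) ∧
        r = sumKLargest k
              (Complex.exp (θ * Complex.I) • A + Complex.exp (-(θ * Complex.I)) • Aᴴ) / 2}
      (wk k A) := by
  have hkm : k ≤ Fintype.card (Fin n) := by simpa using hkn
  have hle (θ : ℝ) : sumKLargest k
      (Complex.exp (θ * Complex.I) • A + Complex.exp (-(θ * Complex.I)) • Aᴴ) / 2 ≤ wk k A := by
    rw [← star_exp_ofReal_mul_I]
    linarith [sumKLargest_smul_add_star_smul_conjTranspose_le A hkm
      (Complex.norm_exp_ofReal_mul_I θ)]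
  obtain ⟨⟨P₀, hP₀, hwk⟩, -⟩ := isGreatest_wk A hkm
  obtain ⟨θ₀, hθ₀, hrot⟩ := exists_mem_Ico_exp_mul_I_mul_eq_norm (A * P₀).trace
  refine ⟨⟨θ₀, hθ₀, le_antisymm ?_ (hle θ₀)⟩, fun r ⟨θ, _, hr⟩ => hr ▸ hle θ⟩
  have hKyFan := (isHermitian_smul_add_star_smul_conjTranspose A
    (Complex.exp (θ₀ * Complex.I))).re_trace_mul_le_sumKLargest hk hP₀
  rw [re_trace_smul_add_star_smul_conjTranspose_mul A _ hP₀.2.1, hrot, Complex.ofReal_re,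
    star_exp_ofReal_mul_I] at hKyFan
  linarith
end

section
/- Let P ∈ M_n(ℂ) be a rank-k orthogonal projection with 1 ≤ k < n. With respect to the decomposition ℂ^n = Ran(P) ⊕ Ker(P), a matrix B belongs to S(P) = { B : tr(BP) = w_k(B) } if and only if B has block form B = [[B₁₁, B₁₂],[−B₁₂*, B₂₂]] with tr(B₁₁) = w_k(B). -/
open Matrix

namespace Stmt6Aux
variable {n : ℕ}

/-! ### Outer products -/

def outer (x y : Fin n → ℂ) : Matrix (Fin n) (Fin n) ℂ :=
  Matrix.of fun i j => x i * star (y j)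

lemma outer_apply (x y : Fin n → ℂ) (i j : Fin n) : outer x y i j = x i * star (y j) := rfl

lemma outer_mul_outer (x y z w : Fin n → ℂ) :
    outer x y * outer z w = (star y ⬝ᵥ z) • outer x w := by
  ext i j
  simp only [mul_apply, outer_apply, Matrix.smul_apply, dotProduct, smul_eq_mul, Finset.sum_mul,
    Pi.star_apply]
  exact Finset.sum_congr rfl fun k _ => by ring

lemma mul_outer (M : Matrix (Fin n) (Fin n) ℂ) (x y : Fin n → ℂ) :
    M * outer x y = outer (M *ᵥ x) y := by
  ext i j
  simp only [mul_apply, outer_apply, mulVec, dotProduct, Finset.sum_mul]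
  exact Finset.sum_congr rfl fun k _ => by ring

lemma outer_mul (M : Matrix (Fin n) (Fin n) ℂ) (x y : Fin n → ℂ) :
    outer x y * M = outer x (Mᴴ *ᵥ y) := by
  ext i j
  simp only [mul_apply, outer_apply, mulVec, dotProduct, conjTranspose_apply, star_sum,
    Finset.mul_sum, star_mul', star_star]
  exact Finset.sum_congr rfl fun k _ => by ring

lemma outer_conjTranspose (x y : Fin n → ℂ) : (outer x y)ᴴ = outer y x := by
  ext i j
  simp [outer_apply, conjTranspose_apply, mul_comm]

lemma outer_smul_left (c : ℂ) (x y : Fin n → ℂ) : outer (c • x) y = c • outer x y := by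
  ext i j
  simp [outer_apply, mul_assoc]

lemma trace_mul_outer (M : Matrix (Fin n) (Fin n) ℂ) (x y : Fin n → ℂ) :
    (M * outer x y).trace = star y ⬝ᵥ (M *ᵥ x) := by
  simp only [trace, diag, mul_apply, outer_apply, dotProduct, mulVec, Pi.star_apply]
  refine Finset.sum_congr rfl fun i _ => ?_
  rw [Finset.mul_sum]
  exact Finset.sum_congr rfl fun k _ => by ring

lemma trace_outer (x y : Fin n → ℂ) : (outer x y).trace = star y ⬝ᵥ x := by
  simp only [trace, diag, outer_apply, dotProduct, Pi.star_apply]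
  exact Finset.sum_congr rfl fun k _ => by ring

lemma star_dot_comm (x y : Fin n → ℂ) : star x ⬝ᵥ y = star (star y ⬝ᵥ x) := by
  simp only [dotProduct, star_sum, star_mul', star_star, Pi.star_apply]
  exact Finset.sum_congr rfl fun k _ => by ring

/-! ### Rank and trace of Hermitian idempotents -/

lemma eig_zero_or_one {E : Matrix (Fin n) (Fin n) ℂ} (h1 : E * E = E) (hE : E.IsHermitian)
    (i : Fin n) : hE.eigenvalues i = 0 ∨ hE.eigenvalues i = 1 := by
  set lam := hE.eigenvalues i with hlam
  have hb := hE.mulVec_eigenvectorBasis i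
  have hb2 : E *ᵥ (E *ᵥ ⇑(hE.eigenvectorBasis i)) = (lam * lam) • ⇑(hE.eigenvectorBasis i) := by
    rw [hb, mulVec_smul, hb, smul_smul]
  rw [mulVec_mulVec, h1, hb] at hb2
  have hnz : ⇑(hE.eigenvectorBasis i) ≠ 0 := by
    have := hE.eigenvectorBasis.orthonormal.ne_zero i
    intro h
    exact this (by ext j; exact congrFun h j)
  have : (lam * lam - lam) • ⇑(hE.eigenvectorBasis i) = 0 := by
    rw [sub_smul, hb2, sub_self]
  rcases smul_eq_zero.mp this with h | h
  · have : lam * (lam - 1) = 0 := by ring_nf; ring_nf at h; linarith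
    rcases mul_eq_zero.mp this with h' | h'
    · exact Or.inl h'
    · exact Or.inr (by linarith)
  · exact absurd h hnz

lemma trace_eq_sum_eigs {E : Matrix (Fin n) (Fin n) ℂ} (hE : E.IsHermitian) :
    E.trace = ((∑ i, hE.eigenvalues i : ℝ) : ℂ) := by
  conv_lhs => rw [hE.spectral_theorem, Unitary.conjStarAlgAut_apply]
  rw [trace_mul_cycle]
  have : (star (hE.eigenvectorUnitary : Matrix (Fin n) (Fin n) ℂ)) *
      (hE.eigenvectorUnitary : Matrix (Fin n) (Fin n) ℂ) = 1 := by
    simpa using (Matrix.mem_unitaryGroup_iff'.mp hE.eigenvectorUnitary.2)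
  rw [this, one_mul, trace_diagonal]
  push_cast
  rfl

lemma rank_cast_eq_trace {E : Matrix (Fin n) (Fin n) ℂ} (h1 : E * E = E) (h2 : Eᴴ = E) :
    (E.rank : ℂ) = E.trace := by
  have hE : E.IsHermitian := h2
  rw [trace_eq_sum_eigs hE, hE.rank_eq_card_non_zero_eigs]
  have : ∑ i, hE.eigenvalues i = (Fintype.card {i // hE.eigenvalues i ≠ 0} : ℝ) := by
    rw [Fintype.card_subtype, ← Finset.sum_filter_ne_zero,
      Finset.card_eq_sum_ones, Nat.cast_sum]
    refine Finset.sum_congr rfl fun i hi => ?_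
    rcases eig_zero_or_one h1 hE i with h | h
    · exact absurd h (Finset.mem_filter.mp hi).2
    · simp [h]
  rw [this]
  push_cast
  rfl

lemma rank_eq_of_trace_eq {E F : Matrix (Fin n) (Fin n) ℂ}
    (hE1 : E * E = E) (hE2 : Eᴴ = E) (hF1 : F * F = F) (hF2 : Fᴴ = F)
    (h : E.trace = F.trace) : E.rank = F.rank := by
  have : (E.rank : ℂ) = (F.rank : ℂ) := by
    rw [rank_cast_eq_trace hE1 hE2, rank_cast_eq_trace hF1 hF2, h]
  exact_mod_cast this

/-! ### An upper bound for `wk` -/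

lemma proj_entry_bound {Q : Matrix (Fin n) (Fin n) ℂ} (h1 : Q * Q = Q) (h2 : Qᴴ = Q)
    (i j : Fin n) : ‖Q i j‖ ≤ 1 := by
  have hQ : Qᴴ * Q = Q := by rw [h2, h1]
  have h3 : Q j j = ((∑ k, Complex.normSq (Q k j) : ℝ) : ℂ) := by
    conv_lhs => rw [← hQ]
    push_cast
    simp only [mul_apply, conjTranspose_apply, Complex.normSq_eq_conj_mul_self]
    rfl
  set s : ℝ := ∑ k, Complex.normSq (Q k j) with hs
  have hs0 : 0 ≤ s := Finset.sum_nonneg fun k _ => Complex.normSq_nonneg _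
  have hterm : ∀ m : Fin n, Complex.normSq (Q m j) ≤ s := fun m =>
    Finset.single_le_sum (fun k _ => Complex.normSq_nonneg (Q k j)) (Finset.mem_univ m)
  have hjj : Complex.normSq (Q j j) = s ^ 2 := by
    rw [h3]
    simp [Complex.normSq_ofReal, sq]
  have hs1 : s ≤ 1 := by nlinarith [hterm j]
  have : Complex.normSq (Q i j) ≤ 1 := le_trans (hterm i) hs1
  calc ‖Q i j‖ = Real.sqrt (Complex.normSq (Q i j)) := by rw [Complex.norm_def]
    _ ≤ Real.sqrt 1 := Real.sqrt_le_sqrt this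
    _ = 1 := Real.sqrt_one

lemma abs_trace_le_bound {B Q : Matrix (Fin n) (Fin n) ℂ} (h1 : Q * Q = Q) (h2 : Qᴴ = Q) :
    ‖(B * Q).trace‖ ≤ ∑ i, ∑ j, ‖B i j‖ := by
  have htr : (B * Q).trace = ∑ i, ∑ j, B i j * Q j i := by
    simp [trace, diag, mul_apply]
  rw [htr]
  calc ‖∑ i, ∑ j, B i j * Q j i‖
      ≤ ∑ i, ‖∑ j, B i j * Q j i‖ := norm_sum_le _ _
    _ ≤ ∑ i, ∑ j, ‖B i j * Q j i‖ :=
        Finset.sum_le_sum fun i _ => norm_sum_le _ _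
    _ ≤ ∑ i, ∑ j, ‖B i j‖ := by
        refine Finset.sum_le_sum fun i _ => Finset.sum_le_sum fun j _ => ?_
        rw [norm_mul]
        calc ‖B i j‖ * ‖Q j i‖
            ≤ ‖B i j‖ * 1 :=
              mul_le_mul_of_nonneg_left (proj_entry_bound h1 h2 j i) (norm_nonneg _)
          _ = ‖B i j‖ := mul_one _

lemma abs_trace_le_wk (k : ℕ) (B Q : Matrix (Fin n) (Fin n) ℂ) (hQ : IsProjOfRank Q k) :
    ‖(B * Q).trace‖ ≤ wk k B := by
  apply le_csSup
  · refine ⟨∑ i, ∑ j, ‖B i j‖, ?_⟩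
    rintro r ⟨Q', hQ', rfl⟩
    exact abs_trace_le_bound hQ'.1 hQ'.2.1
  · exact ⟨Q, hQ, rfl⟩

/-! ### The perturbed projection -/

section Perturb

variable {P : Matrix (Fin n) (Fin n) ℂ} (hP1 : P * P = P) (hP2 : Pᴴ = P)
variable {u v : Fin n → ℂ}
variable (hu : P *ᵥ u = u) (hv : P *ᵥ v = 0)
variable (huu : star u ⬝ᵥ u = 1) (hvv : star v ⬝ᵥ v = 1)

include hP2 hu hv in
lemma dot_uv_zero : star u ⬝ᵥ v = 0 := by
  conv_lhs => rw [← hu]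
  rw [star_mulVec, hP2, ← dotProduct_mulVec, hv, dotProduct_zero]

include hP2 hu hv in
lemma dot_vu_zero : star v ⬝ᵥ u = 0 := by
  rw [star_dot_comm, dot_uv_zero hP2 hu hv, star_zero]

variable {α t : ℝ} (hat : α ^ 2 + t ^ 2 = 1)

/-- the perturbed projection -/
noncomputable def pert (P : Matrix (Fin n) (Fin n) ℂ) (u v : Fin n → ℂ) (α t : ℝ) :
    Matrix (Fin n) (Fin n) ℂ :=
  P - outer u u + outer ((α : ℂ) • u + (t : ℂ) • v) ((α : ℂ) • u + (t : ℂ) • v)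

include hP1 hP2 hu hv huu hvv hat in
lemma pert_proj :
    (pert P u v α t) * (pert P u v α t) = pert P u v α t ∧
    (pert P u v α t)ᴴ = pert P u v α t ∧ (pert P u v α t).trace = P.trace := by
  have huv := dot_uv_zero hP2 hu hv
  have hvu := dot_vu_zero hP2 hu hv
  set u' : Fin n → ℂ := (α : ℂ) • u + (t : ℂ) • v with hu'
  have hPu' : P *ᵥ u' = (α : ℂ) • u := by
    simp [hu', mulVec_add, mulVec_smul, hu, hv]
  have huu' : star u ⬝ᵥ u' = (α : ℂ) := by
    simp [hu', dotProduct_add, dotProduct_smul, huu, huv, smul_eq_mul]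
  have hu'u : star u' ⬝ᵥ u = (α : ℂ) := by
    simp [hu', star_add, star_smul, add_dotProduct, smul_dotProduct, huu, hvu, smul_eq_mul,
      Complex.star_def, Complex.conj_ofReal]
  have hu'u' : star u' ⬝ᵥ u' = 1 := by
    simp only [hu', star_add, star_smul, add_dotProduct, smul_dotProduct, dotProduct_add,
      dotProduct_smul, huu, hvv, huv, hvu, smul_eq_mul, Complex.star_def, Complex.conj_ofReal]
    ring_nf
    rw [← Complex.ofReal_pow, ← Complex.ofReal_pow, ← Complex.ofReal_add, hat,
      Complex.ofReal_one]
  set U := outer u u with hU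
  set W := outer u' u' with hW
  have hPU : P * U = U := by rw [hU, mul_outer, hu]
  have hUP : U * P = U := by rw [hU, outer_mul, hP2, hu]
  have hPW : P * W = (α : ℂ) • outer u u' := by rw [hW, mul_outer, hPu', outer_smul_left]
  have hWP : W * P = (α : ℂ) • outer u' u := by
    rw [hW, outer_mul, hP2, hPu']
    ext i j
    simp [outer_apply, Matrix.smul_apply, Complex.star_def, Complex.conj_ofReal]
    ring
  have hUU : U * U = U := by rw [hU, outer_mul_outer, huu, one_smul]
  have hUW : U * W = (α : ℂ) • outer u u' := by rw [hU, hW, outer_mul_outer, huu']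
  have hWU : W * U = (α : ℂ) • outer u' u := by rw [hW, hU, outer_mul_outer, hu'u]
  have hWW : W * W = W := by rw [hW, outer_mul_outer, hu'u', one_smul]
  have hPP : pert P u v α t = P - U + W := rfl
  refine ⟨?_, ?_, ?_⟩
  · rw [hPP]
    have expand : (P - U + W) * (P - U + W) =
        (P * P - P * U + P * W) - (U * P - U * U + U * W) + (W * P - W * U + W * W) := by
      noncomm_ring
    rw [expand, hP1, hPU, hPW, hUP, hUU, hUW, hWP, hWU, hWW]
    abel
  · rw [hPP]
    simp [conjTranspose_add, conjTranspose_sub, hP2, hU, hW, outer_conjTranspose]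
  · rw [hPP, trace_add, trace_sub, hU, hW, trace_outer, trace_outer, huu, hu'u']
    ring

include hP2 hu hv hat in
lemma pert_trace (B : Matrix (Fin n) (Fin n) ℂ) :
    (B * pert P u v α t).trace = (B * P).trace
      + ((α * t : ℝ) : ℂ) * (star v ⬝ᵥ (B *ᵥ u) + star u ⬝ᵥ (B *ᵥ v))
      + ((t ^ 2 : ℝ) : ℂ) * (star v ⬝ᵥ (B *ᵥ v) - star u ⬝ᵥ (B *ᵥ u)) := by
  have huv := dot_uv_zero hP2 hu hv
  have hvu := dot_vu_zero hP2 hu hv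
  set u' : Fin n → ℂ := (α : ℂ) • u + (t : ℂ) • v with hu'
  have h0 : (B * pert P u v α t).trace =
      (B * P).trace - star u ⬝ᵥ (B *ᵥ u) + star u' ⬝ᵥ (B *ᵥ u') := by
    rw [pert, mul_add, mul_sub, trace_add, trace_sub, trace_mul_outer, trace_mul_outer]
  have h1 : star u' ⬝ᵥ (B *ᵥ u') =
      (α : ℂ) * (α : ℂ) * (star u ⬝ᵥ (B *ᵥ u)) + (α : ℂ) * (t : ℂ) * (star u ⬝ᵥ (B *ᵥ v))
      + (t : ℂ) * (α : ℂ) * (star v ⬝ᵥ (B *ᵥ u))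
      + (t : ℂ) * (t : ℂ) * (star v ⬝ᵥ (B *ᵥ v)) := by
    simp only [hu', star_add, star_smul, add_dotProduct, smul_dotProduct, dotProduct_add,
      dotProduct_smul, mulVec_add, mulVec_smul, Complex.star_def, Complex.conj_ofReal,
      smul_eq_mul]
    ring
  rw [h0, h1]
  have hatC : ((α : ℂ)) ^ 2 + ((t : ℂ)) ^ 2 = 1 := by exact_mod_cast hat
  push_cast
  linear_combination (star u ⬝ᵥ (B *ᵥ u)) * hatC

include hP1 hP2 hu hv huu hvv in
lemma key_re_nonpos {k : ℕ} {B : Matrix (Fin n) (Fin n) ℂ} (hPr : P.rank = k)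
    (htr : (B * P).trace = ((wk k B : ℝ) : ℂ)) :
    (star v ⬝ᵥ (B *ᵥ u) + star u ⬝ᵥ (B *ᵥ v)).re ≤ 0 := by
  set c : ℂ := star v ⬝ᵥ (B *ᵥ u) + star u ⬝ᵥ (B *ᵥ v) with hc
  set e : ℂ := star v ⬝ᵥ (B *ᵥ v) - star u ⬝ᵥ (B *ᵥ u) with he
  set w : ℝ := wk k B with hwdef
  have habs : (0:ℝ) ≤ ‖e‖ := norm_nonneg _
  refine le_of_forall_pos_le_add fun ε hε => ?_
  rw [zero_add]
  have hD : (0:ℝ) < 2 * (‖e‖ + 1) := by positivity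
  set t : ℝ := min (1/2) (ε / (2 * (‖e‖ + 1))) with ht
  have ht0 : 0 < t := lt_min (by norm_num) (div_pos hε hD)
  have ht2 : t ≤ 1/2 := min_le_left _ _
  have htb : t ≤ ε / (2 * (‖e‖ + 1)) := min_le_right _ _
  set α : ℝ := Real.sqrt (1 - t ^ 2) with hα
  have hα2 : α ^ 2 = 1 - t ^ 2 := Real.sq_sqrt (by nlinarith)
  have hat : α ^ 2 + t ^ 2 = 1 := by rw [hα2]; ring
  have hα1 : (1:ℝ)/2 ≤ α := by nlinarith [Real.sqrt_nonneg (1 - t ^ 2)]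
  obtain ⟨hp1, hp2, hp3⟩ := pert_proj hP1 hP2 hu hv huu hvv hat
  have hrank : (pert P u v α t).rank = k := by
    rw [rank_eq_of_trace_eq hp1 hp2 hP1 hP2 hp3, hPr]
  have hb : ‖(B * pert P u v α t).trace‖ ≤ w :=
    abs_trace_le_wk k B _ ⟨hp1, hp2, hrank⟩
  rw [pert_trace hP2 hu hv hat B, htr] at hb
  have hre : w + (α * t) * c.re + t ^ 2 * e.re ≤ w := by
    have h5 := (Complex.re_le_norm (((w:ℝ):ℂ) + ((α * t : ℝ):ℂ) * c + ((t ^ 2 : ℝ):ℂ) * e)).trans hb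
    simpa only [Complex.add_re, Complex.ofReal_re, Complex.re_ofReal_mul] using h5
  have hene : -‖e‖ ≤ e.re := by
    have h6 := Complex.abs_re_le_norm e
    have := neg_abs_le e.re
    linarith [abs_le.mp (le_refl |e.re|)]
  have h2 : (α * t) * c.re ≤ t ^ 2 * ‖e‖ := by nlinarith [sq_nonneg t]
  rcases le_or_gt c.re 0 with h | h
  · linarith
  · have h7 : t * (2 * (‖e‖ + 1)) ≤ ε := (le_div_iff₀ hD).mp htb
    have hstep1 : t * c.re ≤ t * (2 * t * ‖e‖) := by
      nlinarith [mul_nonneg (mul_nonneg (sub_nonneg.mpr hα1) ht0.le) h.le]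
    have hstep2 : c.re ≤ 2 * t * ‖e‖ := le_of_mul_le_mul_left hstep1 ht0
    nlinarith

end Perturb

/-! ### The off-diagonal identity -/

lemma herm_dot_zero {P : Matrix (Fin n) (Fin n) ℂ} (hP1 : P * P = P) (hP2 : Pᴴ = P)
    {k : ℕ} {B : Matrix (Fin n) (Fin n) ℂ} (hPr : P.rank = k)
    (htr : (B * P).trace = ((wk k B : ℝ) : ℂ))
    {u v : Fin n → ℂ} (hu : P *ᵥ u = u) (hv : P *ᵥ v = 0)
    (huu : star u ⬝ᵥ u = 1) (hvv : star v ⬝ᵥ v = 1) :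
    star v ⬝ᵥ ((B + Bᴴ) *ᵥ u) = 0 := by
  set a : ℂ := star v ⬝ᵥ (B *ᵥ u) with ha
  set b : ℂ := star u ⬝ᵥ (B *ᵥ v) with hb
  have key : ∀ μ : ℂ, ‖μ‖ = 1 →
      ((starRingEnd ℂ) μ * a + μ * b).re ≤ 0 := by
    intro μ hμ
    have hv' : P *ᵥ (μ • v) = 0 := by rw [mulVec_smul, hv, smul_zero]
    have hvv' : star (μ • v) ⬝ᵥ (μ • v) = 1 := by
      rw [star_smul, smul_dotProduct, dotProduct_smul, hvv, smul_eq_mul, smul_eq_mul, mul_one,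
        Complex.star_def, mul_comm, Complex.mul_conj]
      have : Complex.normSq μ = 1 := by rw [← Complex.sq_norm, hμ, one_pow]
      rw [this, Complex.ofReal_one]
    have h := key_re_nonpos hP1 hP2 hu hv' huu hvv' hPr htr
    have heq : star (μ • v) ⬝ᵥ (B *ᵥ u) + star u ⬝ᵥ (B *ᵥ (μ • v)) =
        (starRingEnd ℂ) μ * a + μ * b := by
      rw [star_smul, smul_dotProduct, mulVec_smul, dotProduct_smul, ha, hb,
        smul_eq_mul, smul_eq_mul, Complex.star_def]
    rw [heq] at h
    exact h
  have e1 : (a + b).re ≤ 0 := by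
    have h := key 1 (by simp)
    have heq : (starRingEnd ℂ) 1 * a + 1 * b = a + b := by simp
    rwa [heq] at h
  have e2 : (-(a + b)).re ≤ 0 := by
    have h := key (-1) (by simp)
    have heq : (starRingEnd ℂ) (-1) * a + (-1) * b = -(a + b) := by
      rw [map_neg, RingHom.map_one]
      ring
    rwa [heq] at h
  have e3 : (Complex.I * (b - a)).re ≤ 0 := by
    have h := key Complex.I (by simp)
    have heq : (starRingEnd ℂ) Complex.I * a + Complex.I * b = Complex.I * (b - a) := by
      rw [Complex.conj_I]
      ring
    rwa [heq] at h
  have e4 : (Complex.I * (a - b)).re ≤ 0 := by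
    have h := key (-Complex.I) (by simp)
    have heq : (starRingEnd ℂ) (-Complex.I) * a + (-Complex.I) * b = Complex.I * (a - b) := by
      rw [map_neg, Complex.conj_I]
      ring
    rwa [heq] at h
  rw [Complex.I_mul_re, Complex.sub_im] at e3 e4
  rw [Complex.neg_re, Complex.add_re] at e2
  rw [Complex.add_re] at e1
  have hre : a.re + b.re = 0 := by linarith
  have him : a.im - b.im = 0 := by linarith
  have hgoal : star v ⬝ᵥ ((B + Bᴴ) *ᵥ u) = a + (starRingEnd ℂ) b := by
    rw [add_mulVec, dotProduct_add, ha]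
    congr 1
    rw [dotProduct_mulVec, ← star_mulVec, star_dot_comm (B *ᵥ v) u]
    rfl
  rw [hgoal]
  apply Complex.ext
  · rw [Complex.add_re, Complex.conj_re, Complex.zero_re]
    linarith
  · rw [Complex.add_im, Complex.conj_im, Complex.zero_im]
    linarith

lemma norm_sq_dot {x : Fin n → ℂ} :
    star x ⬝ᵥ x = ((∑ i, Complex.normSq (x i) : ℝ) : ℂ) := by
  push_cast
  simp only [dotProduct, Pi.star_apply, Complex.normSq_eq_conj_mul_self]
  rfl

lemma herm_dot_zero' {P : Matrix (Fin n) (Fin n) ℂ} (hP1 : P * P = P) (hP2 : Pᴴ = P)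
    {k : ℕ} {B : Matrix (Fin n) (Fin n) ℂ} (hPr : P.rank = k)
    (htr : (B * P).trace = ((wk k B : ℝ) : ℂ))
    {x y : Fin n → ℂ} (hx : P *ᵥ x = x) (hy : P *ᵥ y = 0) :
    star y ⬝ᵥ ((B + Bᴴ) *ᵥ x) = 0 := by
  by_cases hx0 : x = 0
  · simp [hx0]
  by_cases hy0 : y = 0
  · simp [hy0]
  have sum_pos : ∀ z : Fin n → ℂ, z ≠ 0 → (0:ℝ) < ∑ i, Complex.normSq (z i) := by
    intro z hz
    have : ∃ i, z i ≠ 0 := by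
      by_contra hcon
      push_neg at hcon
      exact hz (funext hcon)
    obtain ⟨i, hi⟩ := this
    exact lt_of_lt_of_le (Complex.normSq_pos.mpr hi)
      (Finset.single_le_sum (fun j _ => Complex.normSq_nonneg (z j)) (Finset.mem_univ i))
  set cx : ℝ := Real.sqrt (∑ i, Complex.normSq (x i)) with hcx
  set cy : ℝ := Real.sqrt (∑ i, Complex.normSq (y i)) with hcy
  have hcx0 : 0 < cx := Real.sqrt_pos.mpr (sum_pos x hx0)
  have hcy0 : 0 < cy := Real.sqrt_pos.mpr (sum_pos y hy0)
  have hxx : star x ⬝ᵥ x = ((cx ^ 2 : ℝ) : ℂ) := by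
    rw [hcx, Real.sq_sqrt (sum_pos x hx0).le, norm_sq_dot]
  have hyy : star y ⬝ᵥ y = ((cy ^ 2 : ℝ) : ℂ) := by
    rw [hcy, Real.sq_sqrt (sum_pos y hy0).le, norm_sq_dot]
  set u : Fin n → ℂ := ((cx⁻¹ : ℝ) : ℂ) • x with hudef
  set v : Fin n → ℂ := ((cy⁻¹ : ℝ) : ℂ) • y with hvdef
  have hu : P *ᵥ u = u := by rw [hudef, mulVec_smul, hx]
  have hv : P *ᵥ v = 0 := by rw [hvdef, mulVec_smul, hy, smul_zero]
  have huu : star u ⬝ᵥ u = 1 := by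
    rw [hudef, star_smul, smul_dotProduct, dotProduct_smul, hxx, smul_eq_mul, smul_eq_mul,
      Complex.star_def, Complex.conj_ofReal, ← Complex.ofReal_mul, ← Complex.ofReal_mul]
    rw [show cx⁻¹ * (cx⁻¹ * cx ^ 2) = 1 by field_simp, Complex.ofReal_one]
  have hvv : star v ⬝ᵥ v = 1 := by
    rw [hvdef, star_smul, smul_dotProduct, dotProduct_smul, hyy, smul_eq_mul, smul_eq_mul,
      Complex.star_def, Complex.conj_ofReal, ← Complex.ofReal_mul, ← Complex.ofReal_mul]
    rw [show cy⁻¹ * (cy⁻¹ * cy ^ 2) = 1 by field_simp, Complex.ofReal_one]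
  have key := herm_dot_zero hP1 hP2 hPr htr hu hv huu hvv
  rw [hudef, hvdef, star_smul, smul_dotProduct, mulVec_smul, dotProduct_smul, smul_eq_mul,
    smul_eq_mul, Complex.star_def, Complex.conj_ofReal] at key
  rcases mul_eq_zero.mp key with h | h
  · exact absurd h (by exact_mod_cast (inv_ne_zero hcy0.ne'))
  rcases mul_eq_zero.mp h with h' | h'
  · exact absurd h' (by exact_mod_cast (inv_ne_zero hcx0.ne'))
  · exact h'

lemma entry_formula {A C : Matrix (Fin n) (Fin n) ℂ} (hA : Aᴴ = A) (i j : Fin n) :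
    star (A *ᵥ Pi.single i 1) ⬝ᵥ (C *ᵥ Pi.single j 1) = (A * C) i j := by
  simp only [dotProduct, Pi.star_apply, mulVec, dotProduct, Pi.single_apply, mul_ite, mul_one,
    mul_zero, Finset.sum_ite_eq', Finset.mem_univ, if_true, star_sum]
  rw [mul_apply]
  refine Finset.sum_congr rfl fun p _ => ?_
  congr 1
  conv_rhs => rw [← hA]
  rfl

end Stmt6Aux

/-- with respect to `ℂⁿ = Ran P ⊕ Ker P`, one has `B ∈ S(P)` iff
`B = [[B₁₁, B₁₂], [-B₁₂*, B₂₂]]` with `tr B₁₁ = w_k(B)`; intrinsically the block form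
says `(1-P) B P = -(P B (1-P))ᴴ` and `tr(P B P) = w_k(B)`. -/
theorem stmt_6 (n k : ℕ) (hk : 1 ≤ k) (hkn : k < n)
    (P : Matrix (Fin n) (Fin n) ℂ) (hP : IsProjOfRank P k)
    (B : Matrix (Fin n) (Fin n) ℂ) :
    (B * P).trace = (wk k B : ℂ) ↔
      ((1 - P) * B * P = -((P * B * (1 - P))ᴴ) ∧ (P * B * P).trace = (wk k B : ℂ)) := by
  obtain ⟨hP1, hP2, hPr⟩ := hP
  have hcyc : (P * B * P).trace = (B * P).trace := by
    calc (P * B * P).trace = (P * (B * P)).trace := by rw [mul_assoc]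
      _ = ((B * P) * P).trace := trace_mul_comm _ _
      _ = (B * (P * P)).trace := by rw [mul_assoc]
      _ = (B * P).trace := by rw [hP1]
  constructor
  · intro h
    have h1P : (1 - P)ᴴ = 1 - P := by rw [conjTranspose_sub, conjTranspose_one, hP2]
    have hzero : (1 - P) * (B + Bᴴ) * P = 0 := by
      ext i j
      have hx : P *ᵥ (P *ᵥ Pi.single j 1) = P *ᵥ Pi.single j 1 := by rw [mulVec_mulVec, hP1]
      have hy : P *ᵥ ((1 - P) *ᵥ Pi.single i 1) = 0 := by
        rw [mulVec_mulVec, show P * (1 - P) = 0 by rw [mul_sub, mul_one, hP1, sub_self],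
          zero_mulVec]
      have hz := Stmt6Aux.herm_dot_zero' hP1 hP2 hPr h hx hy
      have he : star ((1 - P) *ᵥ Pi.single i 1) ⬝ᵥ ((B + Bᴴ) *ᵥ (P *ᵥ Pi.single j 1))
          = ((1 - P) * ((B + Bᴴ) * P)) i j := by
        rw [mulVec_mulVec]
        exact Stmt6Aux.entry_formula h1P i j
      have hij : ((1 - P) * ((B + Bᴴ) * P)) i j = 0 := by rw [← he, hz]
      rw [← mul_assoc] at hij
      rw [hij]
      simp
    refine ⟨?_, by rw [hcyc, h]⟩
    have hh : (P * B * (1 - P))ᴴ = (1 - P) * Bᴴ * P := by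
      rw [conjTranspose_mul, conjTranspose_mul, hP2, h1P, mul_assoc]
    rw [hh]
    have hexp : (1 - P) * (B + Bᴴ) * P = (1 - P) * B * P + (1 - P) * Bᴴ * P := by
      rw [mul_add, add_mul]
    rw [hexp] at hzero
    exact eq_neg_of_add_eq_zero_left hzero
  · rintro ⟨-, h2⟩
    rw [← hcyc]
    exact h2
end

section
/- Let P ∈ H_n be a rank-k orthogonal projection and H ∈ H_n a Hermitian matrix with tr(HP) = w_k(H). Then, with respect to ℂ^n = Ran(P) ⊕ Ker(P), H is block diagonal: H = H₁ ⊕ H₂ with H₁ ∈ H_k, H₂ ∈ H_{n−k}, and λ_k(H₁) ≥ λ₁(H₂). -/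
/-!
Since `tr (H P) = w_k(H) ≥ Re tr (H Q)` for every rank-`k` orthogonal projection `Q`, the
projection `P` maximises `Q ↦ Re tr (H Q)`. For a unit `x ∈ Ran P` and a unit
`u ∈ span {x} ⊕ Ker P`, the matrix `P - x x* + u u*` is again a rank-`k` orthogonal projection,
so maximality gives `Re u*Hu ≤ Re x*Hx`. With `u = y ∈ Ker P` this is the eigenvalue
inequality. With `u ∝ x + ε y` it gives `2 Re x*Hy ≤ O(ε)` for all `ε > 0`, so `Re x*Hy ≤ 0`
for all `y ∈ Ker P`; replacing `y` by `conj (x*Hy) • y` forces `x*Hy = 0`. Hence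
`P H (1 - P) = 0`, and `P H = H P` follows by taking adjoints.
-/

open Matrix

namespace Matrix

variable {m : Type*} [Fintype m]

lemma trace_eq_rank_of_isIdempotentElem [DecidableEq m] {K : Type*} [Field K] {Q : Matrix m m K}
    (hQ : IsIdempotentElem Q) : Q.trace = Q.rank := by
  have hproj : LinearMap.IsProj (LinearMap.range Q.mulVecLin) Q.mulVecLin := by
    refine ⟨fun x => LinearMap.mem_range_self _ x, ?_⟩
    rintro _ ⟨y, rfl⟩
    rw [Matrix.mulVecLin_apply, Matrix.mulVecLin_apply, mulVec_mulVec, hQ.eq]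
  rw [← trace_toLin'_eq]
  exact hproj.trace

lemma norm_apply_le_one_of_isIdempotentElem {𝕜 : Type*} [RCLike 𝕜] {Q : Matrix m m 𝕜}
    (hQ : IsIdempotentElem Q) (hQh : Q.IsHermitian) (i j : m) : ‖Q i j‖ ≤ 1 := by
  set r : ℝ := ∑ p, ‖Q i p‖ ^ 2
  have hdiag : Q i i = (r : 𝕜) := by
    conv_lhs => rw [← hQ.eq]
    simp only [r, mul_apply, RCLike.ofReal_sum, RCLike.ofReal_pow]
    refine Finset.sum_congr rfl fun p _ => ?_
    rw [← hQh.apply p i, RCLike.star_def, RCLike.mul_conj]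
  have hterm : ∀ p, ‖Q i p‖ ^ 2 ≤ r := fun p =>
    Finset.single_le_sum (f := fun p => ‖Q i p‖ ^ 2) (fun _ _ => by positivity)
      (Finset.mem_univ p)
  have hr : r ≤ 1 := by
    have h := hterm i
    rw [hdiag, RCLike.norm_ofReal, sq_abs] at h
    nlinarith [sq_nonneg (‖Q i i‖)]
  nlinarith [hterm j, norm_nonneg (Q i j)]

end Matrix

section ProjOfRank

variable {m : Type*} [Fintype m] [DecidableEq m] {k : ℕ}

lemma isProjOfRank_of_trace_eq {Q : Matrix m m ℂ} (hQ : Q * Q = Q) (hQh : Qᴴ = Q)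
    (htr : Q.trace = k) : IsProjOfRank Q k :=
  ⟨hQ, hQh, by exact_mod_cast (trace_eq_rank_of_isIdempotentElem hQ).symm.trans htr⟩

lemma IsProjOfRank.trace_eq_s8 {P : Matrix m m ℂ} (hP : IsProjOfRank P k) : P.trace = k := by
  rw [trace_eq_rank_of_isIdempotentElem hP.1, hP.2.2]

lemma bddAbove_norm_trace_mul_projOfRank (k : ℕ) (H : Matrix m m ℂ) :
    BddAbove {r : ℝ | ∃ P : Matrix m m ℂ, IsProjOfRank P k ∧ r = ‖(H * P).trace‖} := by
  refine ⟨∑ i, ∑ j, ‖H i j‖, ?_⟩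
  rintro _ ⟨Q, ⟨hQ, hQh, -⟩, rfl⟩
  calc ‖(H * Q).trace‖ = ‖∑ i, ∑ j, H i j * Q j i‖ := by
        simp only [trace, diag, mul_apply]
    _ ≤ ∑ i, ∑ j, ‖H i j * Q j i‖ :=
        (norm_sum_le _ _).trans (Finset.sum_le_sum fun i _ => norm_sum_le _ _)
    _ ≤ ∑ i, ∑ j, ‖H i j‖ := by
        gcongr with i _ j _
        rw [norm_mul]
        exact mul_le_of_le_one_right (norm_nonneg _)
          (norm_apply_le_one_of_isIdempotentElem hQ hQh j i)

lemma re_trace_mul_le_wk (H : Matrix m m ℂ) {Q : Matrix m m ℂ} (hQ : IsProjOfRank Q k) :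
    (H * Q).trace.re ≤ wk k H :=
  (Complex.re_le_norm _).trans (le_csSup (bddAbove_norm_trace_mul_projOfRank k H) ⟨Q, hQ, rfl⟩)

/-- `hPu` says that `u ∈ span {x} ⊕ Ker P`: the new projection trades `x` for `u` in `Ran P`. -/
lemma IsProjOfRank.sub_vecMulVec_add_vecMulVec {P : Matrix m m ℂ} (hP : IsProjOfRank P k)
    {x u : m → ℂ} (hx : P *ᵥ x = x) (hxn : star x ⬝ᵥ x = 1) (hun : star u ⬝ᵥ u = 1)
    (hPu : P *ᵥ u = (star x ⬝ᵥ u) • x) :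
    IsProjOfRank (P - vecMulVec x (star x) + vecMulVec u (star u)) k := by
  have htrP := hP.trace_eq_s8
  obtain ⟨hPP, hPh, -⟩ := hP
  have hPx : star x ᵥ* P = star x := by rw [← hPh, vecMul_conjTranspose, star_star, hx]
  have hPu' : star u ᵥ* P = star (star x ⬝ᵥ u) • star x := by
    rw [← hPh, vecMul_conjTranspose, star_star, hPu, star_smul]
  have hux : star u ⬝ᵥ x = star (star x ⬝ᵥ u) := by rw [star_dotProduct]
  set R := P - vecMulVec x (star x)
  set U := vecMulVec u (star u)
  have hRR : R * R = R := by
    simp only [R, sub_mul, mul_sub, vecMulVec_mul_vecMulVec, hxn, one_smul]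
    simp only [hPP, mul_vecMulVec, vecMulVec_mul, hx, hPx]
    abel
  have hRU : R * U = 0 := by
    simp only [R, U, sub_mul, vecMulVec_mul_vecMulVec]
    rw [mul_vecMulVec, hPu, smul_vecMulVec, vecMulVec_smul, sub_self]
  have hUR : U * R = 0 := by
    simp only [R, U, mul_sub, vecMulVec_mul_vecMulVec]
    rw [vecMulVec_mul, hPu', hux, vecMulVec_smul, sub_self]
  have hUU : U * U = U := by rw [vecMulVec_mul_vecMulVec, hun, one_smul]
  refine isProjOfRank_of_trace_eq ?_ ?_ ?_
  · rw [add_mul, mul_add, mul_add, hRR, hRU, hUR, hUU, add_zero, zero_add]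
  · simp only [R, U, conjTranspose_add, conjTranspose_sub, hPh, conjTranspose_vecMulVec,
      star_star]
  · rw [trace_add, trace_sub, trace_vecMulVec, trace_vecMulVec, dotProduct_comm, hxn,
      dotProduct_comm, hun, htrP, sub_add_cancel]

end ProjOfRank

lemma nonpos_of_forall_pos_le_mul {r K : ℝ} (h : ∀ ε > 0, r ≤ ε * K) : r ≤ 0 := by
  by_contra! hr
  have hK : 0 < |K| + 1 := by positivity
  have h1 := h (r / (|K| + 1)) (by positivity)
  have h2 : r / (|K| + 1) * K ≤ r / (|K| + 1) * |K| :=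
    mul_le_mul_of_nonneg_left (le_abs_self K) (by positivity)
  have h3 : r / (|K| + 1) * |K| < r := by
    rw [div_mul_eq_mul_div, div_lt_iff₀ hK]
    linarith
  linarith

open scoped ComplexOrder in
lemma exists_pos_smul_dotProduct_star_self_eq_one {m : Type*} [Fintype m] {v : m → ℂ}
    (hv : v ≠ 0) : ∃ c : ℝ, 0 < c ∧ star ((c : ℂ) • v) ⬝ᵥ ((c : ℂ) • v) = 1 := by
  obtain ⟨hr, him⟩ := Complex.pos_iff.mp (dotProduct_star_self_pos_iff.mpr hv)
  set r := (star v ⬝ᵥ v).re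
  have hvv : star v ⬝ᵥ v = r := Complex.ext rfl (by simp [← him])
  refine ⟨(√r)⁻¹, by positivity, ?_⟩
  rw [star_smul, smul_dotProduct, dotProduct_smul, hvv, Complex.star_def, Complex.conj_ofReal,
    smul_eq_mul, smul_eq_mul]
  norm_cast
  rw [← mul_assoc, ← sq, inv_pow, Real.sq_sqrt hr.le, inv_mul_cancel₀ hr.ne']

lemma star_dotProduct_eq_zero_of_mulVec_eq {m : Type*} [Fintype m] {P : Matrix m m ℂ}
    (hPh : Pᴴ = P) {x y : m → ℂ} (hx : P *ᵥ x = x) (hy : P *ᵥ y = 0) : star x ⬝ᵥ y = 0 := by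
  rw [← hx, star_mulVec, hPh, ← dotProduct_mulVec, hy, dotProduct_zero]

section Maximizer

variable {m : Type*} [Fintype m] [DecidableEq m] {k : ℕ} {H P : Matrix m m ℂ}

lemma re_dotProduct_mulVec_le_of_isMaxOn (hP : IsProjOfRank P k)
    (hmax : IsMaxOn (fun Q => (H * Q).trace.re) {Q | IsProjOfRank Q k} P) {x u : m → ℂ}
    (hx : P *ᵥ x = x) (hxn : star x ⬝ᵥ x = 1) (hun : star u ⬝ᵥ u = 1)
    (hPu : P *ᵥ u = (star x ⬝ᵥ u) • x) :
    (star u ⬝ᵥ H *ᵥ u).re ≤ (star x ⬝ᵥ H *ᵥ x).re := by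
  have h := isMaxOn_iff.mp hmax _ (hP.sub_vecMulVec_add_vecMulVec hx hxn hun hPu)
  simp only [mul_add, mul_sub, trace_add, trace_sub, mul_vecMulVec, trace_vecMulVec,
    Complex.add_re, Complex.sub_re] at h
  rw [dotProduct_comm (H *ᵥ x), dotProduct_comm (H *ᵥ u)] at h
  linarith

lemma re_dotProduct_mulVec_le_mul_of_isMaxOn (hP : IsProjOfRank P k)
    (hmax : IsMaxOn (fun Q => (H * Q).trace.re) {Q | IsProjOfRank Q k} P) {x u : m → ℂ}
    (hx : P *ᵥ x = x) (hxn : star x ⬝ᵥ x = 1) (hPu : P *ᵥ u = (star x ⬝ᵥ u) • x) :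
    (star u ⬝ᵥ H *ᵥ u).re ≤ (star u ⬝ᵥ u).re * (star x ⬝ᵥ H *ᵥ x).re := by
  rcases eq_or_ne u 0 with rfl | hu
  · simp
  obtain ⟨c, hc, hcu⟩ := exists_pos_smul_dotProduct_star_self_eq_one hu
  have hscale : ∀ v : m → ℂ, star ((c : ℂ) • u) ⬝ᵥ v = (c : ℂ) * (star u ⬝ᵥ v) := fun v => by
    rw [star_smul, smul_dotProduct, Complex.star_def, Complex.conj_ofReal, smul_eq_mul]
  have h := re_dotProduct_mulVec_le_of_isMaxOn hP hmax hx hxn hcu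
    (by rw [mulVec_smul, hPu, dotProduct_smul, smul_smul, smul_eq_mul])
  rw [mulVec_smul, dotProduct_smul, hscale, smul_eq_mul, ← mul_assoc, ← Complex.ofReal_mul,
    Complex.re_ofReal_mul] at h
  rw [dotProduct_smul, hscale, smul_eq_mul, ← mul_assoc, ← Complex.ofReal_mul] at hcu
  have hcu' : c * c * (star u ⬝ᵥ u).re = 1 := by
    simpa using congrArg Complex.re hcu
  have hnn : 0 ≤ (star u ⬝ᵥ u).re := by
    nlinarith [mul_self_nonneg c]
  calc (star u ⬝ᵥ H *ᵥ u).re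
      = c * c * (star u ⬝ᵥ H *ᵥ u).re * (star u ⬝ᵥ u).re := by
        linear_combination (-(star u ⬝ᵥ H *ᵥ u).re) * hcu'
    _ ≤ (star x ⬝ᵥ H *ᵥ x).re * (star u ⬝ᵥ u).re := mul_le_mul_of_nonneg_right h hnn
    _ = _ := mul_comm _ _

lemma re_dotProduct_mulVec_nonpos_of_isMaxOn (hH : H.IsHermitian) (hP : IsProjOfRank P k)
    (hmax : IsMaxOn (fun Q => (H * Q).trace.re) {Q | IsProjOfRank Q k} P) {x y : m → ℂ}
    (hx : P *ᵥ x = x) (hxn : star x ⬝ᵥ x = 1) (hy : P *ᵥ y = 0) :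
    (star x ⬝ᵥ H *ᵥ y).re ≤ 0 := by
  have hxy := star_dotProduct_eq_zero_of_mulVec_eq hP.2.1 hx hy
  have hyx : star y ⬝ᵥ x = 0 := by rw [star_dotProduct, hxy, star_zero]
  have hHyx : star y ⬝ᵥ H *ᵥ x = star (star x ⬝ᵥ H *ᵥ y) := by
    rw [star_dotProduct, star_mulVec, hH.eq, ← dotProduct_mulVec]
  set a := (star x ⬝ᵥ H *ᵥ x).re
  set d := (star y ⬝ᵥ H *ᵥ y).re
  set Y := (star y ⬝ᵥ y).re
  suffices h : ∀ ε > 0, 2 * (star x ⬝ᵥ H *ᵥ y).re ≤ ε * (Y * a - d) by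
    linarith [nonpos_of_forall_pos_le_mul h]
  -- for `u = x + ε y` the bound `h` below reads `a + 2ε Re x*Hy + ε² d ≤ (1 + ε² Y) a`
  intro ε hε
  set u := x + (ε : ℂ) • y
  have hstar : star u = star x + (ε : ℂ) • star y := by
    rw [star_add, star_smul, Complex.star_def, Complex.conj_ofReal]
  have hxu : star x ⬝ᵥ u = 1 := by
    rw [dotProduct_add, dotProduct_smul, hxn, hxy, smul_zero, add_zero]
  have h := re_dotProduct_mulVec_le_mul_of_isMaxOn hP hmax hx hxn
    (by rw [mulVec_add, mulVec_smul, hx, hy, smul_zero, add_zero, hxu, one_smul] : P *ᵥ u = _)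
  rw [hstar] at h
  simp only [u, mulVec_add, mulVec_smul, add_dotProduct, dotProduct_add, smul_dotProduct,
    dotProduct_smul, hHyx, hxn, hxy, hyx, smul_eq_mul, Complex.add_re, Complex.re_ofReal_mul,
    Complex.star_def, Complex.conj_re, Complex.one_re, mul_zero, Complex.zero_re] at h
  nlinarith

lemma dotProduct_mulVec_eq_zero_of_isMaxOn (hH : H.IsHermitian) (hP : IsProjOfRank P k)
    (hmax : IsMaxOn (fun Q => (H * Q).trace.re) {Q | IsProjOfRank Q k} P) {x y : m → ℂ}
    (hx : P *ᵥ x = x) (hy : P *ᵥ y = 0) : star x ⬝ᵥ H *ᵥ y = 0 := by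
  rcases eq_or_ne x 0 with rfl | hx0
  · simp
  obtain ⟨c, hc, hcx⟩ := exists_pos_smul_dotProduct_star_self_eq_one hx0
  set z := star x ⬝ᵥ H *ᵥ y
  -- with `star z • y` in place of `y`, the sign bound reads `c * ‖z‖² ≤ 0`
  have h := re_dotProduct_mulVec_nonpos_of_isMaxOn hH hP hmax
    (by rw [mulVec_smul, hx] : P *ᵥ ((c : ℂ) • x) = _) hcx
    (by rw [mulVec_smul, hy, smul_zero] : P *ᵥ (star z • y) = 0)
  rw [star_smul, smul_dotProduct, mulVec_smul, dotProduct_smul, Complex.star_def,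
    Complex.conj_ofReal, smul_eq_mul, smul_eq_mul, ← Complex.normSq_eq_conj_mul_self,
    ← Complex.ofReal_mul, Complex.ofReal_re] at h
  exact Complex.normSq_eq_zero.mp
    (le_antisymm (nonpos_of_mul_nonpos_right h hc) (Complex.normSq_nonneg z))

open scoped ComplexOrder in
lemma commute_of_isMaxOn (hH : H.IsHermitian) (hP : IsProjOfRank P k)
    (hmax : IsMaxOn (fun Q => (H * Q).trace.re) {Q | IsProjOfRank Q k} P) : P * H = H * P := by
  obtain ⟨hPP, hPh, -⟩ := id hP
  have hM : P * H * (1 - P) = 0 := by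
    refine ext_iff_mulVec.mpr fun w => ?_
    set y := (1 - P) *ᵥ w
    set z := (P * H * (1 - P)) *ᵥ w
    have hz : P *ᵥ z = z := by
      rw [mulVec_mulVec, ← Matrix.mul_assoc, ← Matrix.mul_assoc, hPP]
    have hy : P *ᵥ y = 0 := by
      rw [mulVec_mulVec, mul_sub, mul_one, hPP, sub_self, zero_mulVec]
    rw [zero_mulVec, ← dotProduct_star_self_eq_zero]
    calc star z ⬝ᵥ z = star z ⬝ᵥ P *ᵥ H *ᵥ y := by
          simp only [z, y, mulVec_mulVec, Matrix.mul_assoc]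
      _ = star (P *ᵥ z) ⬝ᵥ H *ᵥ y := by rw [dotProduct_mulVec, star_mulVec P z, hPh]
      _ = 0 := by rw [hz, dotProduct_mulVec_eq_zero_of_isMaxOn hH hP hmax hz hy]
  calc P * H = P * H - (P * H * (1 - P) - (P * H * (1 - P))ᴴ) := by
        rw [hM, conjTranspose_zero, sub_zero, sub_zero]
    _ = H * P := by
        simp only [conjTranspose_mul, conjTranspose_sub, conjTranspose_one, hPh, hH.eq]
        noncomm_ring

end Maximizer

theorem stmt_8_general (n k : ℕ)
    (H : Matrix (Fin n) (Fin n) ℂ) (hH : H.IsHermitian)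
    (P : Matrix (Fin n) (Fin n) ℂ) (hP : IsProjOfRank P k)
    (htr : (H * P).trace = (wk k H : ℂ)) :
    P * H = H * P ∧
      ∀ x y : Fin n → ℂ, P.mulVec x = x → P.mulVec y = 0 →
        star x ⬝ᵥ x = 1 → star y ⬝ᵥ y = 1 →
        (star y ⬝ᵥ H.mulVec y).re ≤ (star x ⬝ᵥ H.mulVec x).re := by
  have hmax : IsMaxOn (fun Q => (H * Q).trace.re) {Q | IsProjOfRank Q k} P :=
    isMaxOn_iff.mpr fun Q hQ => by simpa [htr] using re_trace_mul_le_wk H hQ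
  refine ⟨commute_of_isMaxOn hH hP hmax, fun x y hx hy hxn hyn => ?_⟩
  refine re_dotProduct_mulVec_le_of_isMaxOn hP hmax hx hxn hyn ?_
  rw [hy, star_dotProduct_eq_zero_of_mulVec_eq hP.2.1 hx hy, zero_smul]

/-- if a Hermitian `H` satisfies `tr(HP) = w_k(H)` for a rank-`k` orthogonal
projection `P`, then `H` is block diagonal with respect to `ℂⁿ = Ran P ⊕ Ker P` (i.e. `H`
commutes with `P`), and the smallest eigenvalue of the compression to `Ran P` dominates the
largest eigenvalue of the compression to `Ker P` (expressed via Rayleigh quotients). -/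
theorem stmt_8 (n k : ℕ) (hk : 1 ≤ k) (hkn : k < n)
    (H : Matrix (Fin n) (Fin n) ℂ) (hH : H.IsHermitian)
    (P : Matrix (Fin n) (Fin n) ℂ) (hP : IsProjOfRank P k)
    (htr : (H * P).trace = (wk k H : ℂ)) :
    P * H = H * P ∧
      ∀ x y : Fin n → ℂ, P.mulVec x = x → P.mulVec y = 0 →
        star x ⬝ᵥ x = 1 → star y ⬝ᵥ y = 1 →
        (star y ⬝ᵥ H.mulVec y).re ≤ (star x ⬝ᵥ H.mulVec x).re :=
  stmt_8_general n k H hH P hP htr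
end

section
/- Let 1 ≤ i ≤ k < j ≤ n and let A = (I_k ⊕ 0_{n−k}) + i(μE_{ij} + μ̄E_{ji}) for μ ∈ ℂ with |μ| = 1/2. Then w_k(A) = k, and w_k(A) is attained at the projection P = I_k ⊕ 0_{n−k}, i.e., tr(AP) = w_k(A). -/
/-!
For a rank-`k` orthogonal projection `Q`, write `s = {a | a < k}`. Then
`tr (A Q) = p + i t` with `p = ∑_{a ∈ s} Q_aa ∈ [0, k]` and `t = 2 Re (μ Q_ji)` real, since `Q`
is Hermitian. As `Q` is positive semidefinite with trace `k`, its `2 × 2` principal minors give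
`t² ≤ |Q_ij|² ≤ Q_ii Q_jj ≤ p (k - p)`, hence `|tr (A Q)|² ≤ p² + p (k - p) = p k ≤ k²`.
The value `k` is attained at `Q = P`, where both off-diagonal entries vanish.
-/

open Matrix

open Finset
open scoped ComplexOrder

theorem Matrix.trace_eq_rank_of_isIdempotentElem_s9 {K m : Type*} [Field K] [Fintype m]
    [DecidableEq m] {Q : Matrix m m K} (hQ : IsIdempotentElem Q) : Q.trace = Q.rank := by
  have h : IsIdempotentElem (toLin' Q) := hQ.map toLinAlgEquiv'
  rw [← trace_toLin'_eq, (LinearMap.IsIdempotentElem.isProj_range _ h).trace]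
  rfl

-- The `2 × 2` principal minor on the rows and columns `i, j` is nonnegative.
theorem Matrix.PosSemidef.normSq_apply_le {m : Type*} [Fintype m] {A : Matrix m m ℂ}
    (hA : A.PosSemidef) (i j : m) : Complex.normSq (A i j) ≤ (A i i).re * (A j j).re := by
  classical
  have hdet := (hA.submatrix ![i, j]).det_nonneg
  rw [det_fin_two, Complex.nonneg_iff] at hdet
  have hii := Complex.nonneg_iff.1 (hA.diag_nonneg (i := i))
  simp [← hA.1.apply j i, ← hii.2] at hdet
  rw [Complex.normSq_apply]
  linarith [hdet.1]

theorem Complex.norm_ofReal_add_I_mul_le {p t k : ℝ} (hp : 0 ≤ p) (hpk : p ≤ k)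
    (ht : t ^ 2 ≤ p * (k - p)) : ‖(p : ℂ) + I * t‖ ≤ k := by
  rw [mul_comm, norm_add_mul_I]
  exact Real.sqrt_le_iff.2 ⟨hp.trans hpk, by nlinarith⟩

theorem Complex.sq_two_mul_re_mul_le {μ z : ℂ} (hμ : ‖μ‖ ≤ 1 / 2) :
    (2 * (μ * z).re) ^ 2 ≤ normSq z := by
  have hre : |(μ * z).re| ≤ ‖μ‖ * ‖z‖ := (abs_re_le_norm _).trans_eq (norm_mul μ z)
  have hμz : 2 * |(μ * z).re| ≤ ‖z‖ := by nlinarith [norm_nonneg z]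
  rw [← Complex.sq_norm, ← sq_abs, abs_mul, abs_two]
  exact pow_le_pow_left₀ (by positivity) hμz 2

namespace IsProjOfRank

variable {m : Type*} [Fintype m] [DecidableEq m] {Q : Matrix m m ℂ} {k : ℕ}

theorem posSemidef (hQ : IsProjOfRank Q k) : Q.PosSemidef := by
  obtain ⟨hidem, hherm, -⟩ := hQ
  simpa [hherm, hidem] using posSemidef_conjTranspose_mul_self Q

theorem re_apply_self_nonneg (hQ : IsProjOfRank Q k) (a : m) : 0 ≤ (Q a a).re :=
  (Complex.nonneg_iff.1 hQ.posSemidef.diag_nonneg).1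

theorem sum_re_apply_self (hQ : IsProjOfRank Q k) : ∑ a, (Q a a).re = k := by
  have htr := trace_eq_rank_of_isIdempotentElem_s9 hQ.1
  rw [hQ.2.2, trace] at htr
  simpa using congrArg Complex.re htr

theorem sum_re_apply_self_le (hQ : IsProjOfRank Q k) (s : Finset m) :
    ∑ a ∈ s, (Q a a).re ≤ k :=
  hQ.sum_re_apply_self ▸
    sum_le_sum_of_subset_of_nonneg (subset_univ s) fun a _ _ ↦ hQ.re_apply_self_nonneg a

theorem normSq_apply_le (hQ : IsProjOfRank Q k) {s : Finset m} {i j : m} (hi : i ∈ s)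
    (hj : j ∉ s) :
    Complex.normSq (Q i j) ≤ (∑ a ∈ s, (Q a a).re) * (k - ∑ a ∈ s, (Q a a).re) := by
  have hdiag := hQ.re_apply_self_nonneg
  have hii : (Q i i).re ≤ ∑ a ∈ s, (Q a a).re := single_le_sum (fun a _ ↦ hdiag a) hi
  have hjj : (Q j j).re ≤ k - ∑ a ∈ s, (Q a a).re := by
    rw [← hQ.sum_re_apply_self, ← sum_compl_add_sum s, add_sub_cancel_right]
    exact single_le_sum (fun a _ ↦ hdiag a) (mem_compl.2 hj)
  exact (hQ.posSemidef.normSq_apply_le i j).trans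
    (mul_le_mul hii hjj (hdiag j) ((hdiag i).trans hii))

end IsProjOfRank

theorem wk_eq_of_forall_le {m : Type*} [Fintype m] [DecidableEq m] {k : ℕ}
    {A P : Matrix m m ℂ} {r : ℝ} (hP : IsProjOfRank P k) (hAP : ‖(A * P).trace‖ = r)
    (hle : ∀ Q, IsProjOfRank Q k → ‖(A * Q).trace‖ ≤ r) : wk k A = r :=
  IsGreatest.csSup_eq ⟨⟨P, hP, hAP.symm⟩, by rintro _ ⟨Q, hQ, rfl⟩; exact hle Q hQ⟩

section coordProj

variable {m : Type*} [Fintype m] [DecidableEq m]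

def coordProj (s : Finset m) : Matrix m m ℂ :=
  diagonal fun a ↦ if a ∈ s then 1 else 0

theorem isProjOfRank_coordProj (s : Finset m) : IsProjOfRank (coordProj s) s.card := by
  refine ⟨by simp [coordProj], ?_, by simp [coordProj, rank_diagonal]⟩
  simp [coordProj, diagonal_conjTranspose, Pi.star_def, apply_ite]

theorem trace_coordProj_mul (s : Finset m) (Q : Matrix m m ℂ) :
    (coordProj s * Q).trace = ∑ a ∈ s, Q a a := by
  simp [coordProj, trace, sum_ite_mem]

theorem trace_coordProj_add_mul (s : Finset m) (i j : m) (μ : ℂ) (Q : Matrix m m ℂ) :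
    ((coordProj s + Complex.I • (μ • single i j 1 + starRingEnd ℂ μ • single j i 1)) * Q).trace
      = ∑ a ∈ s, Q a a + Complex.I * (μ * Q j i + starRingEnd ℂ μ * Q i j) := by
  simp only [smul_add, smul_single, smul_eq_mul, mul_one, add_mul, trace_add,
    trace_coordProj_mul, trace_single_mul]
  ring

theorem trace_coordProj_add_mul_coordProj (s : Finset m) {i j : m} (hij : i ≠ j) (μ : ℂ) :
    ((coordProj s + Complex.I • (μ • single i j 1 + starRingEnd ℂ μ • single j i 1)) *
      coordProj s).trace = (s.card : ℂ) := by
  rw [trace_coordProj_add_mul]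
  simp [coordProj, hij, hij.symm]

theorem norm_trace_coordProj_add_mul_le {Q : Matrix m m ℂ} {k : ℕ} (hQ : IsProjOfRank Q k)
    {s : Finset m} {i j : m} (hi : i ∈ s) (hj : j ∉ s) {μ : ℂ} (hμ : ‖μ‖ ≤ 1 / 2) :
    ‖((coordProj s + Complex.I • (μ • single i j 1 + starRingEnd ℂ μ • single j i 1)) *
      Q).trace‖ ≤ k := by
  have hdiag : ∑ a ∈ s, Q a a = ((∑ a ∈ s, (Q a a).re : ℝ) : ℂ) := by
    push_cast
    exact sum_congr rfl fun a _ ↦ (hQ.posSemidef.1.coe_re_apply_self a).symm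
  have hoff : μ * Q j i + starRingEnd ℂ μ * Q i j = ((2 * (μ * Q j i).re : ℝ) : ℂ) := by
    rw [← hQ.posSemidef.1.apply i j, Complex.star_def, ← map_mul, Complex.add_conj]
  rw [trace_coordProj_add_mul, hdiag, hoff]
  refine Complex.norm_ofReal_add_I_mul_le (sum_nonneg fun a _ ↦ hQ.re_apply_self_nonneg a)
    (hQ.sum_re_apply_self_le s) ?_
  calc (2 * (μ * Q j i).re) ^ 2 ≤ Complex.normSq (Q j i) := Complex.sq_two_mul_re_mul_le hμ
    _ = Complex.normSq (Q i j) := by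
      rw [← hQ.posSemidef.1.apply i j, Complex.star_def, Complex.normSq_conj]
    _ ≤ _ := hQ.normSq_apply_le hi hj

end coordProj

theorem stmt_9_general (n k : ℕ) (hkn : k < n)
    (i j : Fin n) (hi : (i : ℕ) < k) (hj : k ≤ (j : ℕ))
    (μ : ℂ) (hμ : ‖μ‖ = 1 / 2)
    (P : Matrix (Fin n) (Fin n) ℂ)
    (hPdef : P = Matrix.of (fun a b : Fin n => if a = b ∧ (a : ℕ) < k then (1 : ℂ) else 0))
    (A : Matrix (Fin n) (Fin n) ℂ)
    (hAdef : A = P + Complex.I •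
        (μ • Matrix.single i j (1 : ℂ)
          + (starRingEnd ℂ μ) • Matrix.single j i (1 : ℂ))) :
    wk k A = k ∧ (A * P).trace = (k : ℂ) := by
  set s : Finset (Fin n) := {a | (a : ℕ) < k}
  have hs : s.card = k := by simp [s, Fin.card_filter_val_lt, hkn.le]
  have hP : P = coordProj s := by
    ext a b
    by_cases hab : a = b <;> simp [hPdef, coordProj, s, hab]
  subst hAdef hP
  have hi' : i ∈ s := by simpa [s] using hi
  have hj' : j ∉ s := by simpa [s] using hj
  have htr := trace_coordProj_add_mul_coordProj s (ne_of_mem_of_not_mem hi' hj') μ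
  rw [hs] at htr
  refine ⟨wk_eq_of_forall_le (hs ▸ isProjOfRank_coordProj s) (by rw [htr, Complex.norm_natCast])
    fun Q hQ ↦ norm_trace_coordProj_add_mul_le hQ hi' hj' hμ.le, htr⟩

/-- for `A = (I_k ⊕ 0) + i(μ E_{ij} + conj μ E_{ji})` with `|μ| = 1/2`,
`i` in the top block and `j` in the bottom block, we have `w_k(A) = k`, attained at
`P = I_k ⊕ 0`. -/
theorem stmt_9 (n k : ℕ) (hk : 1 ≤ k) (hkn : k < n)
    (i j : Fin n) (hi : (i : ℕ) < k) (hj : k ≤ (j : ℕ))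
    (μ : ℂ) (hμ : ‖μ‖ = 1 / 2)
    (P : Matrix (Fin n) (Fin n) ℂ)
    (hPdef : P = Matrix.of (fun a b : Fin n => if a = b ∧ (a : ℕ) < k then (1 : ℂ) else 0))
    (A : Matrix (Fin n) (Fin n) ℂ)
    (hAdef : A = P + Complex.I •
        (μ • Matrix.single i j (1 : ℂ)
          + (starRingEnd ℂ μ) • Matrix.single j i (1 : ℂ))) :
    wk k A = k ∧ (A * P).trace = (k : ℂ) :=
  stmt_9_general n k hkn i j hi hj μ hμ P hPdef A hAdef
end

section
/- Let P ∈ H_n be a rank-k orthogonal projection with 1 ≤ k < n. Then the real span of S(P) = { B ∈ H_n : tr(BP) = w_k(B) } equals H(Ran P) ⊕ H(Ker P) (Hermitian matrices block-diagonal with respect to ℂ^n = Ran P ⊕ Ker P), and hence has real dimension k² + (n−k)². -/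
open Matrix

/-!
If `tr (B P) = w_k(B)`, diagonalize `B = U D U*`. The diagonal `m` of `U* P U` lies in `[0,1]ⁿ`
and sums to `k`, and `∑ λᵢ mᵢ = tr (B P)` dominates every sum of `k` eigenvalues. This forces
`mᵢ = 1` above some threshold eigenvalue and `mᵢ = 0` below it, so `U* P U` is block diagonal
along the eigenspaces of `B` and `P` commutes with `B`.

Conversely, if `B` is Hermitian and commutes with `P`, then `t P + B ∈ S(P)` for all large `t`:
`B` only sees `Q - P` through the compressions `P (1 - Q) P` and `(1 - P) Q (1 - P)`, whose traces
both equal `k - tr (P Q)`, while `t P` gains `t (k - tr (P Q))`. Hence `P` and `B` lie in the span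
of `S(P)`.

The Hermitian part of a `*`-closed complex subspace has real dimension equal to the complex
dimension of the subspace, and the commutant of `P ~ diag(1, …, 1, 0, …, 0)` consists of the
block diagonal matrices, of complex dimension `k² + (n - k)²`.
-/

variable {ι : Type*} [Fintype ι]

namespace Matrix

theorem trace_eq_rank_of_isIdempotentElem_s15 [DecidableEq ι] {K : Type*} [Field K]
    {P : Matrix ι ι K} (hP : IsIdempotentElem P) : P.trace = P.rank := by
  have h : IsIdempotentElem (toLin' P) := hP.map toLinAlgEquiv'
  rw [← trace_toLin'_eq, ((LinearMap.isProj_range_iff_isIdempotentElem _).mpr h).trace]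
  rfl

theorem IsHermitian.ofReal_re_trace_mul {A B : Matrix ι ι ℂ} (hA : A.IsHermitian)
    (hB : B.IsHermitian) : ((A * B).trace.re : ℂ) = (A * B).trace := by
  rw [← Complex.conj_eq_iff_re, ← Complex.star_def, ← trace_conjTranspose, conjTranspose_mul,
    hA.eq, hB.eq, trace_mul_comm]

theorem conjTranspose_mul_self_apply_self {m n : Type*} [Fintype m] (X : Matrix m n ℂ) (i : n) :
    (Xᴴ * X) i i = ((∑ j, ‖X j i‖ ^ 2 : ℝ) : ℂ) := by
  simp [mul_apply, Complex.conj_mul']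

theorem re_trace_conjTranspose_mul_self {m : Type*} [Fintype m] (X : Matrix m ι ℂ) :
    (Xᴴ * X).trace.re = ∑ i, ∑ j, ‖X j i‖ ^ 2 := by
  simp only [trace, diag_apply, conjTranspose_mul_self_apply_self, Complex.re_sum,
    Complex.ofReal_re]

theorem re_trace_conjTranspose_mul_self_nonneg {m : Type*} [Fintype m] (X : Matrix m ι ℂ) :
    0 ≤ (Xᴴ * X).trace.re := by
  rw [re_trace_conjTranspose_mul_self]
  positivity

theorem norm_conjTranspose_mul_self_apply_le {m : Type*} [Fintype m] (X : Matrix m ι ℂ)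
    (i j : ι) : ‖(Xᴴ * X) i j‖ ≤ 2 * (Xᴴ * X).trace.re := by
  have hcol : ∀ i, ∑ l, ‖X l i‖ ^ 2 ≤ (Xᴴ * X).trace.re := fun i => by
    rw [re_trace_conjTranspose_mul_self]
    exact Finset.single_le_sum (f := fun i => ∑ l, ‖X l i‖ ^ 2)
      (fun _ _ => by positivity) (Finset.mem_univ i)
  calc ‖(Xᴴ * X) i j‖ ≤ ∑ l, ‖X l i‖ * ‖X l j‖ := by
        simpa [mul_apply] using norm_sum_le Finset.univ fun l => star (X l i) * X l j
    _ ≤ ∑ l, (‖X l i‖ ^ 2 + ‖X l j‖ ^ 2) := by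
        gcongr with l
        nlinarith [norm_nonneg (X l i), norm_nonneg (X l j)]
    _ ≤ 2 * (Xᴴ * X).trace.re := by
        rw [Finset.sum_add_distrib]
        linarith [hcol i, hcol j]

theorem norm_trace_mul_conjTranspose_mul_self_le {m : Type*} [Fintype m] (B : Matrix ι ι ℂ)
    (X : Matrix m ι ℂ) :
    ‖(B * (Xᴴ * X)).trace‖ ≤ 2 * (∑ i, ∑ j, ‖B i j‖) * (Xᴴ * X).trace.re := by
  calc ‖(B * (Xᴴ * X)).trace‖ ≤ ∑ i, ∑ j, ‖B i j‖ * ‖(Xᴴ * X) j i‖ := by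
        refine (norm_sum_le _ _).trans (Finset.sum_le_sum fun i _ => ?_)
        simpa [mul_apply] using norm_sum_le Finset.univ fun j => B i j * (Xᴴ * X) j i
    _ ≤ ∑ i, ∑ j, ‖B i j‖ * (2 * (Xᴴ * X).trace.re) := by
        gcongr
        exact norm_conjTranspose_mul_self_apply_le X _ _
    _ = 2 * (∑ i, ∑ j, ‖B i j‖) * (Xᴴ * X).trace.re := by
        simp only [← Finset.sum_mul]
        ring

theorem IsIdempotentElem.trace_mul_mul_self {R : Type*} [CommSemiring R] {X : Matrix ι ι R}
    (hX : IsIdempotentElem X) (Q : Matrix ι ι R) : (X * Q * X).trace = (X * Q).trace := by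
  rw [trace_mul_comm, ← mul_assoc, hX.eq]

theorem trace_mul_mul_mul_self_of_commute {R : Type*} [CommSemiring R] {B X : Matrix ι ι R}
    (hX : IsIdempotentElem X) (hXB : Commute X B) (Q : Matrix ι ι R) :
    (B * (X * Q * X)).trace = (B * X * Q).trace := by
  rw [show B * (X * Q * X) = X * (B * Q) * X by simp only [← mul_assoc, hXB.eq],
    hX.trace_mul_mul_self, ← mul_assoc, hXB.eq]

end Matrix

namespace IsStarProjection

open Matrix

variable {P Q : Matrix ι ι ℂ}

theorem isHermitian (hP : IsStarProjection P) : P.IsHermitian :=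
  isHermitian_iff_isSelfAdjoint.mpr hP.isSelfAdjoint

theorem conjTranspose_mul_self (hP : IsStarProjection P) : Pᴴ * P = P := by
  rw [hP.isHermitian.eq, hP.isIdempotentElem.eq]

theorem conjTranspose_mul_mul_self (hQ : IsStarProjection Q) (hP : IsStarProjection P) :
    (Q * P)ᴴ * (Q * P) = P * Q * P := by
  rw [conjTranspose_mul, hP.isHermitian.eq, hQ.isHermitian.eq, mul_assoc, ← mul_assoc Q,
    hQ.isIdempotentElem.eq, mul_assoc]

theorem re_apply_self (hP : IsStarProjection P) (i : ι) :
    (P i i).re = ∑ j, ‖P j i‖ ^ 2 := by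
  conv_lhs => rw [← hP.conjTranspose_mul_self]
  rw [conjTranspose_mul_self_apply_self, Complex.ofReal_re]

theorem norm_apply_self (hP : IsStarProjection P) (i : ι) : ‖P i i‖ = (P i i).re := by
  conv_lhs => rw [← hP.conjTranspose_mul_self]
  rw [conjTranspose_mul_self_apply_self, Complex.norm_real, Real.norm_of_nonneg (by positivity),
    hP.re_apply_self]

variable [DecidableEq ι]

theorem sq_re_apply_self_add_sum_erase (hP : IsStarProjection P) (i : ι) :
    (P i i).re ^ 2 + ∑ j ∈ Finset.univ.erase i, ‖P j i‖ ^ 2 = (P i i).re := by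
  have h := Finset.add_sum_erase Finset.univ (fun j => ‖P j i‖ ^ 2) (Finset.mem_univ i)
  rwa [hP.norm_apply_self, ← hP.re_apply_self] at h

theorem re_apply_self_mem_Icc (hP : IsStarProjection P) (i : ι) :
    (P i i).re ∈ Set.Icc (0 : ℝ) 1 := by
  have h := hP.sq_re_apply_self_add_sum_erase i
  have h0 : 0 ≤ ∑ j ∈ Finset.univ.erase i, ‖P j i‖ ^ 2 := by positivity
  constructor <;> nlinarith

theorem apply_eq_zero_of_re_apply_self_eq_zero_or_one (hP : IsStarProjection P)
    {i j : ι} (hii : (P i i).re = 0 ∨ (P i i).re = 1) (hji : j ≠ i) : P j i = 0 := by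
  have h := hP.sq_re_apply_self_add_sum_erase i
  have hsum : ∑ l ∈ Finset.univ.erase i, ‖P l i‖ ^ 2 = 0 := by
    rcases hii with h' | h' <;> rw [h'] at h <;> linarith
  simpa using (Finset.sum_eq_zero_iff_of_nonneg fun l _ => by positivity).mp hsum j
    (Finset.mem_erase.mpr ⟨hji, Finset.mem_univ j⟩)

theorem re_trace_mul_mem_Icc {k : ℕ} (hP : IsStarProjection P) (hQ : IsStarProjection Q)
    (htrP : P.trace = k) : (P * Q).trace.re ∈ Set.Icc (0 : ℝ) k := by
  have hPQP := re_trace_conjTranspose_mul_self_nonneg (Q * P)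
  have hPQ'P := re_trace_conjTranspose_mul_self_nonneg ((1 - Q) * P)
  rw [hQ.conjTranspose_mul_mul_self hP, hP.isIdempotentElem.trace_mul_mul_self] at hPQP
  rw [hQ.one_sub.conjTranspose_mul_mul_self hP, hP.isIdempotentElem.trace_mul_mul_self, mul_sub,
    mul_one, trace_sub, htrP, Complex.sub_re, Complex.natCast_re] at hPQ'P
  exact ⟨hPQP, by linarith⟩

theorem re_trace_mul_sub_le {B : Matrix ι ι ℂ} {k : ℕ} {c : ℝ}
    (hP : IsStarProjection P) (hQ : IsStarProjection Q) (htrP : P.trace = k)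
    (htrQ : Q.trace = k) (hPB : Commute P B)
    (hc : ∀ X : Matrix ι ι ℂ, ‖(B * (Xᴴ * X)).trace‖ ≤ c * (Xᴴ * X).trace.re) :
    (B * Q).trace.re - (B * P).trace.re ≤ 2 * c * (k - (P * Q).trace.re) := by
  -- For `X = (1 - Q) P`, resp. `X = Q (1 - P)`, `Xᴴ X` is `P (1 - Q) P`, resp.
  -- `(1 - P) Q (1 - P)`, of trace `k - tr (P Q)`, and `tr (B Xᴴ X)` is `tr (B P) - tr (B P Q)`,
  -- resp. `tr (B Q) - tr (B P Q)`
  have hW := hc ((1 - Q) * P)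
  have hZ := hc (Q * (1 - P))
  rw [hQ.one_sub.conjTranspose_mul_mul_self hP,
    trace_mul_mul_mul_self_of_commute hP.isIdempotentElem hPB,
    hP.isIdempotentElem.trace_mul_mul_self, mul_sub, mul_one, mul_sub, mul_one, trace_sub,
    trace_sub, htrP, Complex.sub_re, Complex.natCast_re] at hW
  rw [hQ.conjTranspose_mul_mul_self hP.one_sub,
    trace_mul_mul_mul_self_of_commute hP.one_sub.isIdempotentElem
      ((Commute.one_left B).sub_left hPB),
    hP.one_sub.isIdempotentElem.trace_mul_mul_self, mul_sub, mul_one, sub_mul, sub_mul, one_mul,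
    trace_sub, trace_sub, htrQ, Complex.sub_re, Complex.natCast_re] at hZ
  have hW' := (abs_le.mp (Complex.abs_re_le_norm ((B * P).trace - (B * P * Q).trace))).1
  have hZ' := (abs_le.mp (Complex.abs_re_le_norm ((B * Q).trace - (B * P * Q).trace))).2
  rw [Complex.sub_re] at hW' hZ'
  linarith

end IsStarProjection

section Threshold

variable [DecidableEq ι]

theorem Finset.exists_card_eq_forall_notMem_le (f : ι → ℝ) {k : ℕ} (hk : k ≤ Fintype.card ι) :
    ∃ S : Finset ι, S.card = k ∧ ∀ i ∈ S, ∀ j ∉ S, f j ≤ f i := by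
  obtain ⟨S, hS, hmax⟩ := Finset.exists_max_image (Finset.univ.powersetCard k)
    (fun S => ∑ i ∈ S, f i) (Finset.powersetCard_nonempty.mpr (by simpa using hk))
  rw [Finset.mem_powersetCard] at hS
  refine ⟨S, hS.2, fun i hi j hj => ?_⟩
  have hj' : j ∉ S.erase i := fun h => hj (Finset.mem_of_mem_erase h)
  have hswap := hmax (insert j (S.erase i)) <| Finset.mem_powersetCard.mpr
    ⟨Finset.subset_univ _, by
      rw [Finset.card_insert_of_notMem hj', Finset.card_erase_of_mem hi, hS.2]
      have := Finset.card_pos.mpr ⟨i, hi⟩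
      omega⟩
  rw [Finset.sum_insert hj', Finset.sum_erase_eq_sub hi] at hswap
  linarith

theorem exists_threshold_of_forall_sum_le (lam m : ι → ℝ) {k : ℕ}
    (hm : ∀ i, m i ∈ Set.Icc (0 : ℝ) 1) (hsum : ∑ i, m i = k)
    (hle : ∀ S : Finset ι, S.card = k → ∑ i ∈ S, lam i ≤ ∑ i, lam i * m i) :
    ∃ c, ∀ i, (c < lam i → m i = 1) ∧ (lam i < c → m i = 0) := by
  have hk : k ≤ Fintype.card ι := by
    have : (k : ℝ) ≤ Fintype.card ι := by
      rw [← hsum, Fintype.card_eq_sum_ones, Nat.cast_sum, Nat.cast_one]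
      exact Finset.sum_le_sum fun i _ => (hm i).2
    exact_mod_cast this
  obtain ⟨S, hS, hSle⟩ := Finset.exists_card_eq_forall_notMem_le lam hk
  obtain ⟨c, hcS, hcSc⟩ : ∃ c, (∀ i ∈ S, c ≤ lam i) ∧ ∀ j ∉ S, lam j ≤ c := by
    rcases S.eq_empty_or_nonempty with rfl | hne
    · obtain ⟨c, hc⟩ := (Set.finite_range lam).bddAbove
      exact ⟨c, by simp, fun j _ => hc ⟨j, rfl⟩⟩
    · obtain ⟨i₀, hi₀, hmin⟩ := S.exists_min_image lam hne
      exact ⟨lam i₀, hmin, fun j hj => hSle i₀ hi₀ j hj⟩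
  -- the slack `∑ (lam i - c) (1_S i - m i) = ∑_S lam - ∑ lam m` is a sum of nonnegative terms
  set g : ι → ℝ := fun i => (lam i - c) * ((if i ∈ S then 1 else 0) - m i) with hg
  have hg0 : ∀ i, 0 ≤ g i := fun i => by
    by_cases hi : i ∈ S
    · simpa [hg, hi] using mul_nonneg (sub_nonneg.mpr (hcS i hi)) (sub_nonneg.mpr (hm i).2)
    · simpa [hg, hi] using
        mul_nonpos_of_nonpos_of_nonneg (sub_nonpos.mpr (hcSc i hi)) (hm i).1
  have hgsum : ∑ i, g i = ∑ i ∈ S, lam i - ∑ i, lam i * m i := by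
    simp only [hg, mul_sub, sub_mul, mul_ite, mul_one, mul_zero, Finset.sum_sub_distrib,
      Finset.sum_ite_mem, Finset.univ_inter, ← Finset.mul_sum, hsum, Finset.sum_const, hS,
      nsmul_eq_mul]
    ring
  have hgzero : ∀ i, g i = 0 := fun i =>
    (Finset.sum_eq_zero_iff_of_nonneg fun i _ => hg0 i).mp
      (le_antisymm (by linarith [hle S hS]) (Finset.sum_nonneg fun i _ => hg0 i)) i
      (Finset.mem_univ i)
  refine ⟨c, fun i => ⟨fun hci => ?_, fun hci => ?_⟩⟩
  · have hi : i ∈ S := by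
      by_contra hi
      linarith [hcSc i hi]
    have := hgzero i
    simp only [hg, hi, if_true] at this
    rcases mul_eq_zero.mp this with h | h <;> linarith
  · have hi : i ∉ S := fun hi => by linarith [hcS i hi]
    have := hgzero i
    simp only [hg, hi, if_false] at this
    rcases mul_eq_zero.mp this with h | h <;> linarith

end Threshold

theorem Fintype.card_subtype_iff_iff [DecidableEq ι] (p : ι → Prop) [DecidablePred p] :
    Fintype.card {q : ι × ι // (p q.1 ↔ p q.2)} =
      Fintype.card {i // p i} ^ 2 + Fintype.card {i // ¬ p i} ^ 2 := by
  simp only [Fintype.card_subtype, sq]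
  rw [← Finset.card_product, ← Finset.card_product, ← Finset.card_union_of_disjoint]
  · congr 1
    ext ⟨i, j⟩
    by_cases hi : p i <;> by_cases hj : p j <;> simp [hi, hj]
  · rw [Finset.disjoint_left]
    rintro ⟨i, j⟩
    simp +contextual

theorem IsSelfAdjoint.eq_zero_of_I_smul_eq {E : Type*} [AddCommGroup E] [Module ℂ E]
    [StarAddMonoid E] [StarModule ℂ E] {x y : E} (hx : IsSelfAdjoint x) (hy : IsSelfAdjoint y)
    (hyx : Complex.I • y = x) : x = 0 := by
  have hneg : x = -x := by
    conv_lhs => rw [← hx.star_eq, ← hyx]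
    simp [star_smul, hy.star_eq, ← hyx]
  have h2 : (2 : ℂ) • x = 0 := by
    rw [two_smul]
    nth_rewrite 2 [hneg]
    exact add_neg_cancel x
  exact (smul_eq_zero.mp h2).resolve_left two_ne_zero

open ComplexStarModule in
theorem Submodule.finrank_restrictScalars_inf_selfAdjoint {E : Type*} [AddCommGroup E]
    [Module ℂ E] [StarAddMonoid E] [StarModule ℂ E] [FiniteDimensional ℂ E]
    (C : Submodule ℂ E) (hC : ∀ x ∈ C, star x ∈ C) :
    Module.finrank ℝ ↥(C.restrictScalars ℝ ⊓ selfAdjoint.submodule ℝ E) =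
      Module.finrank ℂ C := by
  have : FiniteDimensional ℝ E := Module.Finite.trans ℂ E
  set H := C.restrictScalars ℝ ⊓ selfAdjoint.submodule ℝ E
  let e : E →ₗ[ℝ] E :=
    (LinearEquiv.smulOfNeZero ℂ E Complex.I Complex.I_ne_zero).restrictScalars ℝ
  have hinf : H ⊓ H.map e = ⊥ :=
    eq_bot_iff.mpr fun x ⟨⟨_, hx⟩, y, ⟨_, hy⟩, hyx⟩ => hx.eq_zero_of_I_smul_eq hy hyx
  have hsup : H ⊔ H.map e = C.restrictScalars ℝ := by
    refine le_antisymm (sup_le inf_le_left ?_) fun x hx => ?_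
    · rintro _ ⟨y, ⟨hy, _⟩, rfl⟩
      exact C.smul_mem Complex.I hy
    · have hx' : x ∈ C := hx
      rw [← realPart_add_I_smul_imaginaryPart x]
      refine Submodule.add_mem_sup ⟨?_, (ℜ x).2⟩ ⟨ℑ x, ⟨?_, (ℑ x).2⟩, rfl⟩
      · rw [realPart_apply_coe]
        exact C.smul_of_tower_mem _ (C.add_mem hx' (hC x hx'))
      · rw [imaginaryPart_apply_coe]
        exact C.smul_mem _ (C.smul_of_tower_mem _ (C.sub_mem hx' (hC x hx')))
  have hdim := Submodule.finrank_sup_add_finrank_inf_eq H (H.map e)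
  have hC2 : Module.finrank ℝ ↥(C.restrictScalars ℝ) = 2 * Module.finrank ℂ C :=
    finrank_real_of_complex C
  rw [hinf, hsup, finrank_bot, LinearEquiv.finrank_map_eq, hC2] at hdim
  omega

namespace Matrix

variable [DecidableEq ι]

noncomputable def commutant (A : Matrix ι ι ℂ) : Submodule ℂ (Matrix ι ι ℂ) :=
  Subalgebra.toSubmodule (Subalgebra.centralizer ℂ {A})

theorem mem_commutant {A X : Matrix ι ι ℂ} : X ∈ commutant A ↔ A * X = X * A := by
  simp [commutant, Subalgebra.mem_centralizer_iff]

theorem mem_commutant_diagonal {d : ι → ℂ} {X : Matrix ι ι ℂ} :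
    X ∈ commutant (diagonal d) ↔ ∀ i j, d i ≠ d j → X i j = 0 := by
  simp only [mem_commutant, ← Matrix.ext_iff, diagonal_mul, mul_diagonal]
  refine forall₂_congr fun i j => ⟨fun h hij => ?_, fun h => ?_⟩
  · have : (d i - d j) * X i j = 0 := by rw [sub_mul, h, mul_comm, sub_self]
    exact (mul_eq_zero.mp this).resolve_left (sub_ne_zero.mpr hij)
  · by_cases hij : d i = d j
    · rw [hij, mul_comm]
    · rw [h hij, mul_zero, zero_mul]

theorem finrank_commutant_diagonal (d : ι → ℂ) :
    Module.finrank ℂ (commutant (diagonal d)) = Fintype.card {q : ι × ι // d q.1 = d q.2} := by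
  let e : commutant (diagonal d) ≃ₗ[ℂ] ({q : ι × ι // d q.1 = d q.2} → ℂ) :=
    { toFun := fun X q => (X : Matrix ι ι ℂ) q.1.1 q.1.2
      map_add' := fun _ _ => rfl
      map_smul' := fun _ _ => rfl
      invFun := fun f => ⟨of fun i j => if h : d i = d j then f ⟨(i, j), h⟩ else 0,
        mem_commutant_diagonal.mpr fun i j h => by simp [h]⟩
      left_inv := fun X => by
        ext i j
        by_cases h : d i = d j
        · simp [h]
        · simp [h, mem_commutant_diagonal.mp X.2 i j h]
      right_inv := fun f => by
        ext ⟨q, hq⟩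
        simp [hq] }
  rw [e.finrank_eq, Module.finrank_fintype_fun_eq_card]

theorem finrank_commutant_map (φ : Matrix ι ι ℂ ≃ₐ[ℂ] Matrix ι ι ℂ) (A : Matrix ι ι ℂ) :
    Module.finrank ℂ (commutant (φ A)) = Module.finrank ℂ (commutant A) := by
  have : commutant (φ A) = (commutant A).map (φ.toLinearEquiv : Matrix ι ι ℂ →ₗ[ℂ] _) := by
    ext X
    rw [Submodule.map_equiv_eq_comap_symm]
    simp only [Submodule.mem_comap, mem_commutant]
    conv_rhs => rw [← φ.injective.eq_iff]
    simp
  rw [this, LinearEquiv.finrank_map_eq]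

theorem IsHermitian.finrank_commutant {A : Matrix ι ι ℂ} (hA : A.IsHermitian) :
    Module.finrank ℂ (commutant A) =
      Fintype.card {q : ι × ι // hA.eigenvalues q.1 = hA.eigenvalues q.2} := by
  rw [← finrank_commutant_map
    (Unitary.conjStarAlgAut ℂ _ (star hA.eigenvectorUnitary)).toAlgEquiv A,
    StarAlgEquiv.coe_toAlgEquiv, hA.conjStarAlgAut_star_eigenvectorUnitary,
    finrank_commutant_diagonal]
  simp

noncomputable def hermitianCommutant (A : Matrix ι ι ℂ) : Submodule ℝ (Matrix ι ι ℂ) :=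
  (commutant A).restrictScalars ℝ ⊓ selfAdjoint.submodule ℝ _

theorem mem_hermitianCommutant {A X : Matrix ι ι ℂ} :
    X ∈ hermitianCommutant A ↔ X.IsHermitian ∧ A * X = X * A := by
  rw [hermitianCommutant, Submodule.mem_inf, Submodule.restrictScalars_mem, mem_commutant,
    and_comm, isHermitian_iff_isSelfAdjoint]
  rfl

theorem IsHermitian.finrank_hermitianCommutant {A : Matrix ι ι ℂ} (hA : A.IsHermitian) :
    Module.finrank ℝ (hermitianCommutant A) = Module.finrank ℂ (commutant A) :=
  Submodule.finrank_restrictScalars_inf_selfAdjoint _ fun X hX => by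
    rw [mem_commutant] at hX ⊢
    rw [star_eq_conjTranspose, ← hA.eq, ← conjTranspose_mul, ← conjTranspose_mul, hX]

end Matrix

open Matrix

variable [DecidableEq ι]

theorem IsStarProjection.commute_diagonal_of_forall_sum_le {P : Matrix ι ι ℂ} {k : ℕ}
    (hP : IsStarProjection P) (htr : P.trace = k) (lam : ι → ℝ)
    (hle : ∀ S : Finset ι, S.card = k →
      ∑ i ∈ S, lam i ≤ (diagonal (fun i => (lam i : ℂ)) * P).trace.re) :
    Commute P (diagonal fun i => (lam i : ℂ)) := by
  have hsum : ∑ i, (P i i).re = k := by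
    simpa [trace] using congrArg Complex.re htr
  have htrD : (diagonal (fun i => (lam i : ℂ)) * P).trace.re = ∑ i, lam i * (P i i).re := by
    simp [trace, diagonal_mul]
  obtain ⟨c, hc⟩ := exists_threshold_of_forall_sum_le lam (fun i => (P i i).re)
    hP.re_apply_self_mem_Icc hsum (fun S hS => htrD ▸ hle S hS)
  have hcol : ∀ i j, lam i ≠ c → j ≠ i → P j i = 0 := fun i j hi hji =>
    hP.apply_eq_zero_of_re_apply_self_eq_zero_or_one
      (by rcases hi.lt_or_gt with h | h; exacts [Or.inl ((hc i).2 h), Or.inr ((hc i).1 h)]) hji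
  have hoff : ∀ i j, lam i ≠ lam j → P i j = 0 := fun i j hij => by
    by_cases hj : lam j = c
    · rw [← hP.isHermitian.apply, hcol i j (hj ▸ hij) (fun h => hij (h ▸ rfl)), star_zero]
    · exact hcol j i hj (fun h => hij (h ▸ rfl))
  ext i j
  by_cases hij : lam i = lam j
  · simp [diagonal_mul, mul_diagonal, hij, mul_comm]
  · simp [diagonal_mul, mul_diagonal, hoff i j hij]

theorem IsStarProjection.eigenvalues_eq_zero_or_one {P : Matrix ι ι ℂ} (hP : IsStarProjection P)
    (i : ι) : hP.isHermitian.eigenvalues i = 0 ∨ hP.isHermitian.eigenvalues i = 1 := by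
  have h := congrFun₂ (hP.isIdempotentElem.map
    (Unitary.conjStarAlgAut ℂ _ (star hP.isHermitian.eigenvectorUnitary))).eq i i
  rw [hP.isHermitian.conjStarAlgAut_star_eigenvectorUnitary, diagonal_mul_diagonal] at h
  simp only [Function.comp_apply, diagonal_apply_eq] at h
  exact IsIdempotentElem.iff_eq_zero_or_one.mp (by exact_mod_cast h)

theorem isStarProjection_diagonal_indicator (S : Finset ι) :
    IsStarProjection (diagonal fun i => if i ∈ S then (1 : ℂ) else 0) := by
  rw [isStarProjection_iff', diagonal_mul_diagonal, star_eq_conjTranspose, diagonal_conjTranspose]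
  constructor <;> congr 1 <;> ext i <;> by_cases hi : i ∈ S <;> simp [hi]

theorem isProjOfRank_iff {P : Matrix ι ι ℂ} {k : ℕ} :
    IsProjOfRank P k ↔ IsStarProjection P ∧ P.trace = k := by
  rw [IsProjOfRank, isStarProjection_iff', star_eq_conjTranspose, and_assoc]
  refine and_congr_right fun hP => and_congr_right fun _ => ?_
  rw [trace_eq_rank_of_isIdempotentElem_s15 hP, Nat.cast_inj]

theorem norm_trace_mul_le_wk (B : Matrix ι ι ℂ) {Q : Matrix ι ι ℂ} {k : ℕ}
    (hQ : IsProjOfRank Q k) : ‖(B * Q).trace‖ ≤ wk k B := by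
  refine le_csSup ⟨2 * (∑ i, ∑ j, ‖B i j‖) * k, ?_⟩ ⟨Q, hQ, rfl⟩
  rintro _ ⟨Q, hQ, rfl⟩
  obtain ⟨hQ, htr⟩ := isProjOfRank_iff.mp hQ
  simpa [hQ.conjTranspose_mul_self, htr] using norm_trace_mul_conjTranspose_mul_self_le B Q

theorem wk_eq_of_forall_norm_le {A P : Matrix ι ι ℂ} {k : ℕ} (hP : IsProjOfRank P k)
    (h : ∀ Q, IsProjOfRank Q k → ‖(A * Q).trace‖ ≤ ‖(A * P).trace‖) :
    wk k A = ‖(A * P).trace‖ :=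
  IsGreatest.csSup_eq ⟨⟨P, hP, rfl⟩, by rintro _ ⟨Q, hQ, rfl⟩; exact h Q hQ⟩

namespace IsProjOfRank

variable {P B : Matrix ι ι ℂ} {k : ℕ}

theorem isHermitian (hP : IsProjOfRank P k) : P.IsHermitian := hP.2.1

theorem commute_of_trace_mul_eq_wk (hP : IsProjOfRank P k) (hB : B.IsHermitian)
    (h : (B * P).trace = wk k B) : Commute P B := by
  set φ := Unitary.conjStarAlgAut ℂ (Matrix ι ι ℂ) (star hB.eigenvectorUnitary)
  have hφB : φ B = diagonal fun i => (hB.eigenvalues i : ℂ) :=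
    hB.conjStarAlgAut_star_eigenvectorUnitary
  obtain ⟨hPs, htrP⟩ := isProjOfRank_iff.mp hP
  suffices key : Commute (φ P) (φ B) by simpa using key.map φ.symm
  rw [hφB]
  refine (hPs.map φ).commute_diagonal_of_forall_sum_le (by rw [trace_map', htrP]) _
    fun S hS => ?_
  set E : Matrix ι ι ℂ := diagonal fun i => if i ∈ S then 1 else 0
  have hE : IsProjOfRank (φ.symm E) k := isProjOfRank_iff.mpr
    ⟨(isStarProjection_diagonal_indicator S).map φ.symm, by simp [E, hS]⟩
  calc ∑ i ∈ S, hB.eigenvalues i = (B * φ.symm E).trace.re := by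
        rw [← trace_map' φ, map_mul, φ.apply_symm_apply, hφB]
        simp [E, trace, diagonal_mul_diagonal]
    _ ≤ ‖(B * φ.symm E).trace‖ := Complex.re_le_norm _
    _ ≤ wk k B := norm_trace_mul_le_wk B hE
    _ = (φ B * φ P).trace.re := by rw [← map_mul, trace_map', h, Complex.ofReal_re]
    _ = _ := by rw [hφB]

theorem abs_re_trace_smul_add_mul_le (hP : IsProjOfRank P k) {Q : Matrix ι ι ℂ}
    (hQ : IsProjOfRank Q k) (hPB : Commute P B) {c t : ℝ}
    (hc : ∀ X : Matrix ι ι ℂ, ‖(B * (Xᴴ * X)).trace‖ ≤ c * (Xᴴ * X).trace.re) (ht : 2 * c ≤ t) :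
    |((t • P + B) * Q).trace.re| ≤ ((t • P + B) * P).trace.re := by
  obtain ⟨hPs, htrP⟩ := isProjOfRank_iff.mp hP
  obtain ⟨hQs, htrQ⟩ := isProjOfRank_iff.mp hQ
  have hs := hPs.re_trace_mul_mem_Icc hQs htrP
  have hcmp := hPs.re_trace_mul_sub_le hQs htrP htrQ hPB hc
  have hBQ := hc Q
  have hBP := hc P
  rw [hQs.conjTranspose_mul_self, htrQ] at hBQ
  rw [hPs.conjTranspose_mul_self, htrP] at hBP
  simp only [add_mul, smul_mul_assoc, trace_add, trace_smul, Complex.add_re, Complex.smul_re,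
    hPs.isIdempotentElem.eq, htrP, Complex.natCast_re, smul_eq_mul] at hBQ hBP ⊢
  have hBQ' := abs_le.mp ((Complex.abs_re_le_norm _).trans hBQ)
  have hBP' := abs_le.mp ((Complex.abs_re_le_norm _).trans hBP)
  have hcs : 0 ≤ c * (P * Q).trace.re := by
    rcases le_or_gt 0 c with h | h
    · exact mul_nonneg h hs.1
    · nlinarith [hs.2]
  rw [abs_le]
  constructor
  · nlinarith [mul_le_mul_of_nonneg_right ht (add_nonneg hs.1 (Nat.cast_nonneg k))]
  · nlinarith [mul_le_mul_of_nonneg_right ht (sub_nonneg.mpr hs.2)]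

theorem trace_mul_eq_wk_smul_add (hP : IsProjOfRank P k) (hB : B.IsHermitian)
    (hPB : Commute P B) {c t : ℝ}
    (hc : ∀ X : Matrix ι ι ℂ, ‖(B * (Xᴴ * X)).trace‖ ≤ c * (Xᴴ * X).trace.re) (ht : 2 * c ≤ t) :
    ((t • P + B) * P).trace = wk k (t • P + B) := by
  have hA : (t • P + B).IsHermitian := (hP.isHermitian.smul (IsSelfAdjoint.all t)).add hB
  have hbound := fun Q (hQ : IsProjOfRank Q k) => hP.abs_re_trace_smul_add_mul_le hQ hPB hc ht
  have hreal : ∀ Q, IsProjOfRank Q k →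
      ‖((t • P + B) * Q).trace‖ = |((t • P + B) * Q).trace.re| := fun Q hQ => by
    rw [← hA.ofReal_re_trace_mul (isProjOfRank_iff.mp hQ).1.isHermitian, Complex.norm_real,
      Real.norm_eq_abs, Complex.ofReal_re]
  have hP0 := (abs_nonneg _).trans (hbound P hP)
  rw [wk_eq_of_forall_norm_le hP fun Q hQ => by
      rw [hreal Q hQ, hreal P hP, abs_of_nonneg hP0]
      exact hbound Q hQ,
    hreal P hP, abs_of_nonneg hP0, hA.ofReal_re_trace_mul hP.isHermitian]

theorem span_trace_mul_eq_wk (hP : IsProjOfRank P k) :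
    Submodule.span ℝ {B | B.IsHermitian ∧ (B * P).trace = (wk k B : ℂ)} = hermitianCommutant P := by
  refine le_antisymm (Submodule.span_le.mpr fun B ⟨hB, h⟩ => ?_) fun B hB => ?_
  · exact mem_hermitianCommutant.mpr ⟨hB, (hP.commute_of_trace_mul_eq_wk hB h).eq⟩
  obtain ⟨hBh, hPB⟩ := mem_hermitianCommutant.mp hB
  set c := 2 * ∑ i, ∑ j, ‖B i j‖
  have hmem : ∀ t, 2 * c ≤ t →
      t • P + B ∈ Submodule.span ℝ {B | B.IsHermitian ∧ (B * P).trace = (wk k B : ℂ)} :=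
    fun t ht => Submodule.subset_span
      ⟨(hP.isHermitian.smul (IsSelfAdjoint.all t)).add hBh,
        hP.trace_mul_eq_wk_smul_add hBh hPB (norm_trace_mul_conjTranspose_mul_self_le B) ht⟩
  have hPmem := Submodule.sub_mem _ (hmem (2 * c + 1) (by linarith)) (hmem (2 * c) le_rfl)
  rw [add_sub_add_right_eq_sub, ← sub_smul, add_sub_cancel_left, one_smul] at hPmem
  simpa using Submodule.sub_mem _ (hmem (2 * c) le_rfl) (Submodule.smul_mem _ (2 * c) hPmem)

theorem finrank_commutant (hP : IsProjOfRank P k) :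
    Module.finrank ℂ (commutant P) = k ^ 2 + (Fintype.card ι - k) ^ 2 := by
  obtain ⟨hPs, -⟩ := isProjOfRank_iff.mp hP
  have hrank : Fintype.card {i // hPs.isHermitian.eigenvalues i ≠ 0} = k := by
    rw [← hPs.isHermitian.rank_eq_card_non_zero_eigs]
    exact hP.2.2
  rw [hPs.isHermitian.finrank_commutant, ← hrank, ← Fintype.card_subtype_compl,
    ← Fintype.card_subtype_iff_iff]
  refine Fintype.card_congr (Equiv.subtypeEquivRight fun q => ?_)
  rcases hPs.eigenvalues_eq_zero_or_one q.1 with h1 | h1 <;>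
    rcases hPs.eigenvalues_eq_zero_or_one q.2 with h2 | h2 <;> simp [h1, h2]

end IsProjOfRank

theorem stmt_15_general (n k : ℕ)
    (P : Matrix (Fin n) (Fin n) ℂ) (hP : IsProjOfRank P k) :
    (Submodule.span ℝ
        {B : Matrix (Fin n) (Fin n) ℂ | B.IsHermitian ∧ (B * P).trace = (wk k B : ℂ)} :
        Set (Matrix (Fin n) (Fin n) ℂ))
      = {B : Matrix (Fin n) (Fin n) ℂ | B.IsHermitian ∧ P * B = B * P} ∧
    Module.finrank ℝ
        (Submodule.span ℝ
          {B : Matrix (Fin n) (Fin n) ℂ | B.IsHermitian ∧ (B * P).trace = (wk k B : ℂ)})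
      = k ^ 2 + (n - k) ^ 2 := by
  rw [hP.span_trace_mul_eq_wk]
  refine ⟨Set.ext fun B => mem_hermitianCommutant, ?_⟩
  rw [hP.isHermitian.finrank_hermitianCommutant, hP.finrank_commutant, Fintype.card_fin]

/-- for a rank-`k` orthogonal projection `P`, the real span of the Hermitian
cone `S(P) = { B ∈ H_n : tr(BP) = w_k(B) }` equals the set of Hermitian matrices that are
block diagonal with respect to `ℂⁿ = Ran P ⊕ Ker P` (i.e. Hermitian matrices commuting with
`P`), and has real dimension `k² + (n-k)²`. -/
theorem stmt_15 (n k : ℕ) (hk : 1 ≤ k) (hkn : k < n)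
    (P : Matrix (Fin n) (Fin n) ℂ) (hP : IsProjOfRank P k) :
    (Submodule.span ℝ
        {B : Matrix (Fin n) (Fin n) ℂ | B.IsHermitian ∧ (B * P).trace = (wk k B : ℂ)} :
        Set (Matrix (Fin n) (Fin n) ℂ))
      = {B : Matrix (Fin n) (Fin n) ℂ | B.IsHermitian ∧ P * B = B * P} ∧
    Module.finrank ℝ
        (Submodule.span ℝ
          {B : Matrix (Fin n) (Fin n) ℂ | B.IsHermitian ∧ (B * P).trace = (wk k B : ℂ)})
      = k ^ 2 + (n - k) ^ 2 :=
  stmt_15_general n k P hP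
end
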